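/- arXiv:2111.14400 — 6 statements merged into one kernel-verified Lean document; each statement's English description precedes it below -/
import Mathlib

section
/- For α ∈ (0,1), any c > 0 and ϑ ∈ (0,1], the following estimate holds: ∫₀^ϑ (c+ζ)^(α-1)(ϑ-ζ)^(α-1) dζ ≥ B(α,α)(ϑ+c)^(2α-1) − (1/α) ϑ^(α-1) c^α. -/
open MeasureTheory Real Set Filter

noncomputable def Beta (a b : ℝ) : ℝ := ∫ s in (0:ℝ)..1, s ^ (a - 1) * (1 - s) ^ (b - 1)

theorem stmt_1 (α : ℝ) (hα : α ∈ Set.Ioo (0:ℝ) 1) (c : ℝ) (hc : 0 < c)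
    (ϑ : ℝ) (hϑ : ϑ ∈ Set.Ioc (0:ℝ) 1) :
    (∫ ζ in (0:ℝ)..ϑ, (c + ζ) ^ (α - 1) * (ϑ - ζ) ^ (α - 1)) ≥
      Beta α α * (ϑ + c) ^ (2 * α - 1) - (1 / α) * ϑ ^ (α - 1) * c ^ α := by
  obtain ⟨hα0, hα1⟩ := hα
  obtain ⟨hϑ0, hϑ1⟩ := hϑ
  have hP : (0:ℝ) < ϑ + c := by linarith
  set s0 : ℝ := c / (ϑ + c) with hs0def
  have hs0pos : 0 < s0 := div_pos hc hP
  have hs0lt : s0 < 1 := (div_lt_one hP).mpr (by linarith)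
  have hs0m : s0 * (ϑ + c) = c := by rw [hs0def]; exact div_mul_cancel₀ c hP.ne'
  have h1s0 : 1 - s0 = ϑ / (ϑ + c) := by field_simp [hs0def]; linear_combination -hs0m
  have hexp : -1 < α - 1 := by linarith
  -- Step A: substitution
  have hA : (∫ ζ in (0:ℝ)..ϑ, (c + ζ) ^ (α - 1) * (ϑ - ζ) ^ (α - 1)) =
      (ϑ + c) ^ (2 * α - 1) * ∫ s in s0..1, s ^ (α - 1) * (1 - s) ^ (α - 1) := by
    have hsub := intervalIntegral.smul_integral_comp_mul_add
      (fun ζ => (c + ζ) ^ (α - 1) * (ϑ - ζ) ^ (α - 1)) (a := s0) (b := 1) (ϑ + c) (-c)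
    have e1 : (ϑ + c) * s0 + -c = 0 := by linear_combination hs0m
    have e2 : (ϑ + c) * 1 + -c = ϑ := by ring
    rw [e1, e2] at hsub
    rw [← hsub]
    have hcong : ∀ s ∈ Set.uIcc s0 1,
        (c + ((ϑ + c) * s + -c)) ^ (α - 1) * (ϑ - ((ϑ + c) * s + -c)) ^ (α - 1) =
        (ϑ + c) ^ (2 * α - 2) * (s ^ (α - 1) * (1 - s) ^ (α - 1)) := by
      intro s hs
      rw [Set.uIcc_of_le hs0lt.le] at hs
      obtain ⟨hs1, hs2⟩ := hs
      have hsnn : 0 ≤ s := le_trans hs0pos.le hs1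
      have h1snn : 0 ≤ 1 - s := by linarith
      have r1 : c + ((ϑ + c) * s + -c) = (ϑ + c) * s := by ring
      have r2 : ϑ - ((ϑ + c) * s + -c) = (ϑ + c) * (1 - s) := by ring
      rw [r1, r2, Real.mul_rpow hP.le hsnn, Real.mul_rpow hP.le h1snn,
        show (2*α - 2 : ℝ) = (α-1) + (α-1) by ring, Real.rpow_add hP]
      ring
    rw [intervalIntegral.integral_congr hcong, intervalIntegral.integral_const_mul,
      smul_eq_mul, ← mul_assoc, show (2*α-1:ℝ) = 1 + (2*α-2) by ring,
      Real.rpow_add hP, Real.rpow_one]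
  -- integrability
  have cont1 : ContinuousOn (fun s : ℝ => (1 - s) ^ (α - 1)) (Set.uIcc 0 s0) := by
    apply ContinuousOn.rpow_const (by fun_prop)
    intro s hs
    rw [Set.uIcc_of_le hs0pos.le] at hs
    left
    have := hs.2
    intro h
    nlinarith
  have int1 : IntervalIntegrable (fun s : ℝ => s ^ (α - 1) * (1 - s) ^ (α - 1))
      volume 0 s0 := (intervalIntegral.intervalIntegrable_rpow' hexp).mul_continuousOn cont1
  have int2 : IntervalIntegrable (fun s : ℝ => s ^ (α - 1) * (1 - s) ^ (α - 1))
      volume s0 1 := by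
    have h1 : IntervalIntegrable (fun s : ℝ => (1 - s) ^ (α - 1)) volume s0 1 := by
      have := (intervalIntegral.intervalIntegrable_rpow' hexp (a := 1 - s0) (b := 1 - 1)).comp_sub_left 1
      simpa using this
    apply h1.continuousOn_mul
    apply ContinuousOn.rpow_const (by fun_prop)
    intro s hs
    rw [Set.uIcc_of_le hs0lt.le] at hs
    left
    have := hs.1
    intro h
    nlinarith
  -- split Beta
  have hsplit : (∫ s in (0:ℝ)..s0, s ^ (α - 1) * (1 - s) ^ (α - 1)) +
      (∫ s in s0..(1:ℝ), s ^ (α - 1) * (1 - s) ^ (α - 1)) = Beta α α :=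
    intervalIntegral.integral_add_adjacent_intervals int1 int2
  -- bound the head
  set K : ℝ := (1 - s0) ^ (α - 1) with hK
  have hKpos : 0 < K := Real.rpow_pos_of_pos (by linarith) _
  have intg : IntervalIntegrable (fun s : ℝ => s ^ (α - 1) * K) volume 0 s0 :=
    (intervalIntegral.intervalIntegrable_rpow' hexp).mul_const K
  have hbound : (∫ s in (0:ℝ)..s0, s ^ (α - 1) * (1 - s) ^ (α - 1)) ≤
      (∫ s in (0:ℝ)..s0, s ^ (α - 1) * K) := by
    apply intervalIntegral.integral_mono_on hs0pos.le int1 intg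
    intro s hs
    obtain ⟨hs1, hs2⟩ := hs
    by_cases h0 : s = 0
    · subst h0
      rw [Real.zero_rpow (by linarith), zero_mul, zero_mul]
    have hspos : 0 < s := lt_of_le_of_ne hs1 (Ne.symm h0)
    apply mul_le_mul_of_nonneg_left _ (Real.rpow_nonneg hspos.le _)
    exact Real.rpow_le_rpow_of_nonpos (by linarith) (by linarith) (by linarith)
  have hval : (∫ s in (0:ℝ)..s0, s ^ (α - 1) * K) = K * (s0 ^ α / α) := by
    rw [intervalIntegral.integral_mul_const, integral_rpow (Or.inl hexp)]
    rw [Real.zero_rpow (by linarith : α - 1 + 1 ≠ 0)]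
    ring_nf
  -- algebra
  have hPow : (ϑ + c) ^ (2 * α - 1) * (K * (s0 ^ α / α)) = 1 / α * ϑ ^ (α - 1) * c ^ α := by
    rw [hK, h1s0, hs0def, Real.div_rpow hϑ0.le hP.le, Real.div_rpow hc.le hP.le]
    rw [show (2 * α - 1 : ℝ) = (α - 1) + α by ring, Real.rpow_add hP]
    have h1 : (ϑ + c) ^ (α - 1) ≠ 0 := (Real.rpow_pos_of_pos hP _).ne'
    have h2 : (ϑ + c) ^ α ≠ 0 := (Real.rpow_pos_of_pos hP _).ne'
    field_simp
  rw [hA, ge_iff_le, ← hsplit]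
  have hfinal : (∫ s in s0..(1:ℝ), s ^ (α - 1) * (1 - s) ^ (α - 1)) ≥
      ((∫ s in (0:ℝ)..s0, s ^ (α - 1) * (1 - s) ^ (α - 1)) +
       (∫ s in s0..(1:ℝ), s ^ (α - 1) * (1 - s) ^ (α - 1))) - K * (s0 ^ α / α) := by
    have := hbound.trans_eq hval
    linarith
  have hPpow : (0:ℝ) < (ϑ + c) ^ (2 * α - 1) := Real.rpow_pos_of_pos hP _
  calc ((∫ s in (0:ℝ)..s0, s ^ (α - 1) * (1 - s) ^ (α - 1)) +
       (∫ s in s0..(1:ℝ), s ^ (α - 1) * (1 - s) ^ (α - 1))) * (ϑ + c) ^ (2 * α - 1)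
        - 1 / α * ϑ ^ (α - 1) * c ^ α
      = (ϑ + c) ^ (2 * α - 1) * (((∫ s in (0:ℝ)..s0, s ^ (α - 1) * (1 - s) ^ (α - 1)) +
       (∫ s in s0..(1:ℝ), s ^ (α - 1) * (1 - s) ^ (α - 1))) - K * (s0 ^ α / α)) := by
        rw [mul_sub, hPow]; ring
    _ ≤ (ϑ + c) ^ (2 * α - 1) * ∫ s in s0..(1:ℝ), s ^ (α - 1) * (1 - s) ^ (α - 1) :=
        mul_le_mul_of_nonneg_left hfinal hPpow.le
end

section
/- Let α ∈ (0,1), 0 ≤ t < τ ≤ T − η for some η ∈ (0, T−t), and ϑ ∈ (0,1]. Then ∫₀ᵗ [(t + ϑ(T−t) − ξ)^(α−1) − (τ + ϑ(T−τ) − ξ)^(α−1)] dξ ≤ (τ − t) / (ϑ^(1−α) η^(1−α)). -/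
/-!
With `a = t + ϑ(T - t)` and `b = τ + ϑ(T - τ)` we have `t < a ≤ b`, and the integral equals
`F a - F b` for `F c = (c ^ α - (c - t) ^ α) / α`. As `c ↦ c ^ α` is increasing and concave,
`F a - F b ≤ (b - a) (a - t) ^ (α - 1)`; finally `b - a = (1 - ϑ)(τ - t) ≤ τ - t` and
`a - t = ϑ(T - t) ≥ ϑη`.
-/

open MeasureTheory Real Set Filter

lemma Real.rpow_le_rpow_add_mul_rpow_sub_one {x y p : ℝ} (hx : 0 < x) (hy : 0 ≤ y)
    (hp0 : 0 ≤ p) (hp1 : p ≤ 1) :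
    y ^ p ≤ x ^ p + p * x ^ (p - 1) * (y - x) := by
  have hs : -1 ≤ (y - x) / x := by
    rw [le_div_iff₀ hx]
    linarith
  calc y ^ p = x ^ p * (1 + (y - x) / x) ^ p := by
        rw [← mul_rpow hx.le (by linarith), mul_add, mul_div_cancel₀ _ hx.ne']
        ring_nf
    _ ≤ x ^ p * (1 + p * ((y - x) / x)) :=
        mul_le_mul_of_nonneg_left (rpow_one_add_le_one_add_mul_self hs hp0 hp1) (by positivity)
    _ = x ^ p + p * x ^ (p - 1) * (y - x) := by
        rw [rpow_sub_one hx.ne']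
        field_simp

lemma intervalIntegrable_sub_rpow {α : ℝ} (hα : 0 < α) (c a b : ℝ) :
    IntervalIntegrable (fun ξ => (c - ξ) ^ (α - 1)) volume a b := by
  simpa using (intervalIntegral.intervalIntegrable_rpow' (a := c - a) (b := c - b)
    (by linarith : -1 < α - 1)).comp_sub_left c

lemma integral_sub_rpow {α : ℝ} (hα : 0 < α) (c a b : ℝ) :
    ∫ ξ in a..b, (c - ξ) ^ (α - 1) = ((c - a) ^ α - (c - b) ^ α) / α := by
  rw [intervalIntegral.integral_comp_sub_left (fun x => x ^ (α - 1)) c,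
    integral_rpow (Or.inl (by linarith)), sub_add_cancel]

lemma integral_sub_rpow_sub_sub_rpow_le {α t a b : ℝ} (hα0 : 0 < α) (hα1 : α ≤ 1)
    (ht : 0 ≤ t) (hta : t < a) (hab : a ≤ b) :
    ∫ ξ in (0:ℝ)..t, ((a - ξ) ^ (α - 1) - (b - ξ) ^ (α - 1)) ≤ (b - a) * (a - t) ^ (α - 1) := by
  rw [intervalIntegral.integral_sub (intervalIntegrable_sub_rpow hα0 a 0 t)
    (intervalIntegrable_sub_rpow hα0 b 0 t), integral_sub_rpow hα0, integral_sub_rpow hα0,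
    div_sub_div_same, div_le_iff₀ hα0]
  have hmono : a ^ α ≤ b ^ α := rpow_le_rpow (by linarith) hab hα0.le
  have htangent : (b - t) ^ α ≤ (a - t) ^ α + α * (a - t) ^ (α - 1) * ((b - t) - (a - t)) :=
    rpow_le_rpow_add_mul_rpow_sub_one (by linarith) (by linarith) hα0.le hα1
  simp only [sub_zero]
  linarith

theorem stmt_3_general (α t τ T η ϑ : ℝ) (hα : α ∈ Set.Ioo (0:ℝ) 1)
    (ht : 0 ≤ t) (htτ : t < τ) (hη : η ∈ Set.Ioo 0 (T - t))
    (hϑ : ϑ ∈ Set.Ioc (0:ℝ) 1) :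
    (∫ ξ in (0:ℝ)..t,
        ((t + ϑ * (T - t) - ξ) ^ (α - 1) - (τ + ϑ * (T - τ) - ξ) ^ (α - 1))) ≤
      (τ - t) / (ϑ ^ (1 - α) * η ^ (1 - α)) := by
  obtain ⟨hα0, hα1⟩ := hα
  obtain ⟨hη0, hηT⟩ := hη
  obtain ⟨hϑ0, hϑ1⟩ := hϑ
  have hgap : ϑ * η ≤ t + ϑ * (T - t) - t := by nlinarith
  have hshift : τ + ϑ * (T - τ) - (t + ϑ * (T - t)) = (1 - ϑ) * (τ - t) := by ring
  have hrhs : (τ - t) / (ϑ ^ (1 - α) * η ^ (1 - α)) = (τ - t) * (ϑ * η) ^ (α - 1) := by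
    rw [← mul_rpow hϑ0.le hη0.le, div_eq_mul_inv, ← rpow_neg (by positivity), neg_sub]
  rw [hrhs]
  calc _ ≤ (τ + ϑ * (T - τ) - (t + ϑ * (T - t))) * (t + ϑ * (T - t) - t) ^ (α - 1) :=
        integral_sub_rpow_sub_sub_rpow_le hα0 hα1.le ht (by nlinarith) (by nlinarith)
    _ ≤ (τ - t) * (ϑ * η) ^ (α - 1) := by
        rw [hshift]
        exact mul_le_mul (by nlinarith) (rpow_le_rpow_of_nonpos (by positivity) hgap (by linarith))
          (rpow_nonneg ((by positivity : 0 ≤ ϑ * η).trans hgap) _) (by linarith)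

theorem stmt_3 (α t τ T η ϑ : ℝ) (hα : α ∈ Set.Ioo (0:ℝ) 1)
    (ht : 0 ≤ t) (htτ : t < τ) (hτ : τ ≤ T - η) (hη : η ∈ Set.Ioo 0 (T - t))
    (hϑ : ϑ ∈ Set.Ioc (0:ℝ) 1) :
    (∫ ξ in (0:ℝ)..t,
        ((t + ϑ * (T - t) - ξ) ^ (α - 1) - (τ + ϑ * (T - τ) - ξ) ^ (α - 1))) ≤
      (τ - t) / (ϑ ^ (1 - α) * η ^ (1 - α)) :=
  stmt_3_general α t τ T η ϑ hα ht htτ hη hϑ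
end

section
/- Let α ∈ (0,1), 0 ≤ t < τ < T and ϑ ∈ (0,1]. Then |∫ₜ^τ (τ + ϑ(T−τ) − ξ)^(α−1) dξ − (τ−t) ϑ^(α−1) (T−t)^(α−1)| ≤ 2(τ−t) [ϑ^(α−1)(T−τ)^(α−1) − (τ + ϑ(T−τ) − t)^(α−1)]. -/
/-! The integrand `ξ ↦ (τ + ϑ(T - τ) - ξ)^(α - 1)` is nondecreasing on `[t, τ]`, so the integral
lies between `(τ - t)` times its values at the endpoints. Since `ϑ(T - t)` lies between the two
bases `ϑ(T - τ)` and `τ + ϑ(T - τ) - t`, the term `(τ - t) ϑ^(α-1) (T - t)^(α-1)` lies in the same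
interval, whose length bounds the difference. -/

open MeasureTheory Real Set

theorem Real.monotoneOn_rpow_const_sub {c p : ℝ} (hp : p ≤ 0) :
    MonotoneOn (fun ξ : ℝ => (c - ξ) ^ p) (Iio c) := fun _ hx _ hy hxy =>
  antitoneOn_rpow_Ioi_of_exponent_nonpos hp (mem_Ioi.2 (sub_pos.2 hy)) (mem_Ioi.2 (sub_pos.2 hx))
    (by linarith)

theorem MonotoneOn.intervalIntegral_mem_Icc {f : ℝ → ℝ} {a b : ℝ} (hf : MonotoneOn f (Icc a b))
    (hab : a ≤ b) :
    (∫ x in a..b, f x) ∈ Icc ((b - a) * f a) ((b - a) * f b) := by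
  have hint : IntervalIntegrable f volume a b := by
    refine MonotoneOn.intervalIntegrable ?_
    rwa [uIcc_of_le hab]
  have ha : a ∈ Icc a b := left_mem_Icc.2 hab
  have hb : b ∈ Icc a b := right_mem_Icc.2 hab
  constructor
  · simpa using intervalIntegral.integral_mono_on hab intervalIntegrable_const hint
      fun x hx => hf ha hx hx.1
  · simpa using intervalIntegral.integral_mono_on hab hint intervalIntegrable_const
      fun x hx => hf hx hb hx.2

theorem stmt_5_general (α t τ T ϑ : ℝ) (hα : α ∈ Set.Ioo (0:ℝ) 1)
    (htτ : t < τ) (hτT : τ < T) (hϑ : ϑ ∈ Set.Ioc (0:ℝ) 1) :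
    |(∫ ξ in t..τ, (τ + ϑ * (T - τ) - ξ) ^ (α - 1)) -
        (τ - t) * ϑ ^ (α - 1) * (T - t) ^ (α - 1)| ≤
      2 * (τ - t) * (ϑ ^ (α - 1) * (T - τ) ^ (α - 1) - (τ + ϑ * (T - τ) - t) ^ (α - 1)) := by
  obtain ⟨-, hα1⟩ := hα
  obtain ⟨hϑ0, hϑ1⟩ := hϑ
  have hp : α - 1 ≤ 0 := by linarith
  set A := τ + ϑ * (T - τ)
  have hAτ : A - τ = ϑ * (T - τ) := by ring
  have hbase : 0 < A - τ := by rw [hAτ]; nlinarith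
  have hmid : A - τ ≤ ϑ * (T - t) ∧ ϑ * (T - t) ≤ A - t := by
    constructor <;> nlinarith
  have hmono : MonotoneOn (fun ξ => (A - ξ) ^ (α - 1)) (Icc t τ) :=
    (monotoneOn_rpow_const_sub hp).mono fun ξ hξ => by
      simp only [mem_Iio]; linarith [hξ.2]
  have hI := hmono.intervalIntegral_mem_Icc htτ.le
  have hM : (ϑ * (T - t)) ^ (α - 1) ∈ Icc ((A - t) ^ (α - 1)) ((A - τ) ^ (α - 1)) :=
    ⟨rpow_le_rpow_of_nonpos (hbase.trans_le hmid.1) hmid.2 hp,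
      rpow_le_rpow_of_nonpos hbase hmid.1 hp⟩
  rw [hAτ, mul_rpow hϑ0.le (by linarith)] at hI hM
  rw [mul_rpow hϑ0.le (by linarith)] at hM
  have hτt : 0 ≤ τ - t := by linarith
  calc _ ≤ (τ - t) * (ϑ ^ (α - 1) * (T - τ) ^ (α - 1)) - (τ - t) * (A - t) ^ (α - 1) := by
        rw [mul_assoc]
        exact abs_sub_le_of_le_of_le hI.1 hI.2 (mul_le_mul_of_nonneg_left hM.1 hτt)
          (mul_le_mul_of_nonneg_left hM.2 hτt)
    _ ≤ _ := by nlinarith [hM.1.trans hM.2]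

theorem stmt_5 (α t τ T ϑ : ℝ) (hα : α ∈ Set.Ioo (0:ℝ) 1)
    (ht : 0 ≤ t) (htτ : t < τ) (hτT : τ < T) (hϑ : ϑ ∈ Set.Ioc (0:ℝ) 1) :
    |(∫ ξ in t..τ, (τ + ϑ * (T - τ) - ξ) ^ (α - 1)) -
        (τ - t) * ϑ ^ (α - 1) * (T - t) ^ (α - 1)| ≤
      2 * (τ - t) * (ϑ ^ (α - 1) * (T - τ) ^ (α - 1) - (τ + ϑ * (T - τ) - t) ^ (α - 1)) :=
  stmt_5_general α t τ T ϑ hα htτ hτT hϑ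
end

section
/- Existence and uniqueness for linear weakly singular Volterra equations: Let α ∈ (0,1), let ȳ : (0,1] → ℝ be continuous with ϑ ↦ ϑ^(1−α) ȳ(ϑ) bounded, and let c, d : [0,1] → ℝ be continuous. Then there exists a unique continuous function y : (0,1] → ℝ with ϑ ↦ ϑ^(1−α) y(ϑ) bounded such that y(ϑ) = ȳ(ϑ) + (1/Γ(α)) ∫₀^ϑ [c(ζ) y(ζ) + d(ζ)] (ϑ−ζ)^(α−1) dζ for every ϑ ∈ (0,1]. -/
/-!
Writing `y ζ = ζ ^ (α - 1) * g ζ` turns the equation into a fixed-point problem `g = Φ g` on the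
Banach space of bounded continuous functions on `(0,1]`. After the substitution `ζ = ϑ s`, the
weakly singular integral of a function bounded by `M ζ ^ a` is bounded by `M B(a+1, α) ϑ ^ (a+α)`.
Iterating, `|(Φ^[n] g₁ - Φ^[n] g₂) ϑ| ≤ Cₙ ϑ ^ (n α) ‖g₁ - g₂‖`, where `Cₙ` is a product of
factors `‖c‖ / Γ(α) · B(kα + α, α)` that tend to `0`; so some iterate of `Φ` is a contraction,
and `Φ` has exactly one fixed point.
-/

open MeasureTheory Real Set Filter Topology Interval

namespace WeaklySingularVolterra

lemma aestronglyMeasurable_uIoc_of_continuousOn_Ioo {f : ℝ → ℝ} {u v : ℝ} (huv : u ≤ v)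
    (hf : ContinuousOn f (Ioo u v)) : AEStronglyMeasurable f (volume.restrict (Ι u v)) := by
  rw [uIoc_of_le huv, ← Measure.restrict_congr_set Ioo_ae_eq_Ioc]
  exact hf.aestronglyMeasurable measurableSet_Ioo

lemma intervalIntegrable_rpow_mul_sub_rpow {a b ϑ : ℝ} (ha : -1 < a) (hb : -1 < b) (hϑ : 0 < ϑ) :
    IntervalIntegrable (fun ζ => ζ ^ a * (ϑ - ζ) ^ b) volume 0 ϑ := by
  have hleft : IntervalIntegrable (fun ζ => ζ ^ a * (ϑ - ζ) ^ b) volume 0 (ϑ / 2) := by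
    refine (intervalIntegral.intervalIntegrable_rpow' ha).mul_continuousOn <|
      (continuousOn_const.sub continuousOn_id).rpow_const fun ζ hζ => Or.inl ?_
    rw [uIcc_of_le (by positivity)] at hζ
    exact (sub_pos.2 (by linarith [hζ.2] : ζ < ϑ)).ne'
  have hright : IntervalIntegrable (fun ζ => ζ ^ a * (ϑ - ζ) ^ b) volume (ϑ / 2) ϑ := by
    have h := (intervalIntegral.intervalIntegrable_rpow' (a := 0) (b := ϑ / 2) hb).comp_sub_left ϑ
    rw [sub_zero, sub_half] at h
    refine h.symm.continuousOn_mul (continuousOn_id.rpow_const fun ζ hζ => Or.inl ?_)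
    rw [uIcc_of_le (by linarith)] at hζ
    exact (by linarith [hζ.1] : (0:ℝ) < ζ).ne'
  exact hleft.trans hright

/-- The exponents are shifted by one with respect to `Complex.betaIntegral`:
`betaIntegral a b = B(a + 1, b + 1)`. -/
noncomputable def betaIntegral (a b : ℝ) : ℝ := ∫ s in (0:ℝ)..1, s ^ a * (1 - s) ^ b

lemma betaIntegral_nonneg (a b : ℝ) : 0 ≤ betaIntegral a b :=
  intervalIntegral.integral_nonneg zero_le_one fun _ hs =>
    mul_nonneg (rpow_nonneg hs.1 _) (rpow_nonneg (sub_nonneg.2 hs.2) _)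

lemma intervalIntegral_mul_sub_rpow_eq (h : ℝ → ℝ) (b : ℝ) {ϑ : ℝ} (hϑ : 0 < ϑ) :
    ∫ ζ in (0:ℝ)..ϑ, h ζ * (ϑ - ζ) ^ b =
      ϑ ^ (b + 1) * ∫ s in (0:ℝ)..1, h (ϑ * s) * (1 - s) ^ b := by
  have hsub := intervalIntegral.smul_integral_comp_mul_left (E := ℝ) (a := 0) (b := 1)
    (fun ζ => h ζ * (ϑ - ζ) ^ b) ϑ
  rw [mul_zero, mul_one, smul_eq_mul] at hsub
  rw [← hsub, rpow_add_one hϑ.ne', mul_comm (ϑ ^ b) ϑ, mul_assoc,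
    ← intervalIntegral.integral_const_mul (ϑ ^ b)]
  congr 1
  refine intervalIntegral.integral_congr fun s hs => ?_
  rw [uIcc_of_le zero_le_one] at hs
  rw [show ϑ - ϑ * s = ϑ * (1 - s) by ring, mul_rpow hϑ.le (by linarith [hs.2])]
  ring

lemma intervalIntegral_rpow_mul_sub_rpow (a b : ℝ) {ϑ : ℝ} (hϑ : 0 < ϑ) :
    ∫ ζ in (0:ℝ)..ϑ, ζ ^ a * (ϑ - ζ) ^ b = ϑ ^ (a + b + 1) * betaIntegral a b := by
  rw [intervalIntegral_mul_sub_rpow_eq _ _ hϑ, betaIntegral,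
    ← intervalIntegral.integral_const_mul, ← intervalIntegral.integral_const_mul]
  refine intervalIntegral.integral_congr fun s hs => ?_
  rw [uIcc_of_le zero_le_one] at hs
  simp only [mul_rpow hϑ.le hs.1, rpow_add hϑ]
  ring

lemma tendsto_betaIntegral_atTop {b : ℝ} (hb : -1 < b) :
    Tendsto (fun a => betaIntegral a b) atTop (𝓝 0) := by
  have hlim := intervalIntegral.tendsto_integral_filter_of_dominated_convergence
    (μ := volume) (a := 0) (b := 1) (l := (atTop : Filter ℝ)) (f := fun _ => (0:ℝ))
    (F := fun (a : ℝ) s => s ^ a * (1 - s) ^ b) (fun s => (1 - s) ^ b) ?_ ?_ ?_ ?_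
  · simpa [betaIntegral] using hlim
  · refine Eventually.of_forall fun a => aestronglyMeasurable_uIoc_of_continuousOn_Ioo
      zero_le_one ((continuousOn_id.rpow_const fun s hs => Or.inl hs.1.ne').mul
        ((continuousOn_const.sub continuousOn_id).rpow_const fun s hs => Or.inl ?_))
    exact (sub_pos.2 hs.2).ne'
  · filter_upwards [eventually_ge_atTop 0] with a ha
    refine ae_of_all _ fun s hs => ?_
    rw [uIoc_of_le zero_le_one] at hs
    rw [norm_mul, norm_of_nonneg (rpow_nonneg hs.1.le _),
      norm_of_nonneg (rpow_nonneg (sub_nonneg.2 hs.2) _)]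
    exact mul_le_of_le_one_left (rpow_nonneg (sub_nonneg.2 hs.2) _)
      (rpow_le_one hs.1.le hs.2 ha)
  · simpa using intervalIntegrable_rpow_mul_sub_rpow (a := 0) (ϑ := 1) (by norm_num) hb one_pos
  · filter_upwards [Measure.ae_ne volume 1] with s hs1 hs
    rw [uIoc_of_le zero_le_one] at hs
    simpa using (tendsto_rpow_atTop_of_base_lt_one s (by linarith [hs.1])
      (lt_of_le_of_ne hs.2 hs1)).mul_const ((1 - s) ^ b)

section WeightedBound

variable {h : ℝ → ℝ} {M a b ϑ : ℝ}

lemma nonneg_of_forall_abs_le_mul_rpow (hM : ∀ ζ ∈ Ioc (0:ℝ) 1, |h ζ| ≤ M * ζ ^ a) : 0 ≤ M := by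
  simpa using (abs_nonneg _).trans (hM 1 (right_mem_Ioc.2 one_pos))

lemma abs_mul_sub_rpow_le (hM : ∀ ζ ∈ Ioc (0:ℝ) 1, |h ζ| ≤ M * ζ ^ a) (hϑ : ϑ ≤ 1) {ζ : ℝ}
    (hζ : ζ ∈ Ioc 0 ϑ) : |h ζ * (ϑ - ζ) ^ b| ≤ M * (ζ ^ a * (ϑ - ζ) ^ b) := by
  have hkernel : 0 ≤ (ϑ - ζ) ^ b := rpow_nonneg (sub_nonneg.2 hζ.2) _
  rw [abs_mul, abs_of_nonneg hkernel, ← mul_assoc]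
  exact mul_le_mul_of_nonneg_right (hM ζ ⟨hζ.1, hζ.2.trans hϑ⟩) hkernel

lemma intervalIntegrable_mul_sub_rpow (ha : -1 < a) (hb : -1 < b)
    (hcont : ContinuousOn h (Ioc 0 1)) (hM : ∀ ζ ∈ Ioc (0:ℝ) 1, |h ζ| ≤ M * ζ ^ a)
    (hϑ : ϑ ∈ Ioc (0:ℝ) 1) :
    IntervalIntegrable (fun ζ => h ζ * (ϑ - ζ) ^ b) volume 0 ϑ := by
  refine ((intervalIntegrable_rpow_mul_sub_rpow ha hb hϑ.1).const_mul M).mono_fun' ?_ ?_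
  · refine aestronglyMeasurable_uIoc_of_continuousOn_Ioo hϑ.1.le <|
      (hcont.mono fun ζ hζ => ⟨hζ.1, hζ.2.le.trans hϑ.2⟩).mul <|
        (continuousOn_const.sub continuousOn_id).rpow_const fun ζ hζ => Or.inl ?_
    exact (sub_pos.2 hζ.2).ne'
  · rw [uIoc_of_le hϑ.1.le]
    exact ae_restrict_of_forall_mem measurableSet_Ioc fun ζ hζ => abs_mul_sub_rpow_le hM hϑ.2 hζ

lemma abs_intervalIntegral_mul_sub_rpow_le (ha : -1 < a) (hb : -1 < b)
    (hM : ∀ ζ ∈ Ioc (0:ℝ) 1, |h ζ| ≤ M * ζ ^ a) (hϑ : ϑ ∈ Ioc (0:ℝ) 1) :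
    |∫ ζ in (0:ℝ)..ϑ, h ζ * (ϑ - ζ) ^ b| ≤ M * betaIntegral a b * ϑ ^ (a + b + 1) :=
  calc |∫ ζ in (0:ℝ)..ϑ, h ζ * (ϑ - ζ) ^ b| ≤ ∫ ζ in (0:ℝ)..ϑ, M * (ζ ^ a * (ϑ - ζ) ^ b) :=
        intervalIntegral.norm_integral_le_of_norm_le (f := fun ζ => h ζ * (ϑ - ζ) ^ b) hϑ.1.le
          (ae_of_all _ fun _ hζ => abs_mul_sub_rpow_le hM hϑ.2 hζ)
          ((intervalIntegrable_rpow_mul_sub_rpow ha hb hϑ.1).const_mul M)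
    _ = M * betaIntegral a b * ϑ ^ (a + b + 1) := by
        rw [intervalIntegral.integral_const_mul, intervalIntegral_rpow_mul_sub_rpow a b hϑ.1]
        ring

lemma continuousOn_intervalIntegral_mul_sub_rpow (ha : -1 < a) (hb : -1 < b)
    (hcont : ContinuousOn h (Ioc 0 1)) (hM : ∀ ζ ∈ Ioc (0:ℝ) 1, |h ζ| ≤ M * ζ ^ a) :
    ContinuousOn (fun ϑ => ∫ ζ in (0:ℝ)..ϑ, h ζ * (ϑ - ζ) ^ b) (Ioc 0 1) := by
  have hM0 : 0 ≤ M := nonneg_of_forall_abs_le_mul_rpow hM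
  have hmul {ϑ s : ℝ} (hϑ : ϑ ∈ Ioc (0:ℝ) 1) (hs : s ∈ Ioc (0:ℝ) 1) : ϑ * s ∈ Ioc (0:ℝ) 1 :=
    ⟨mul_pos hϑ.1 hs.1, mul_le_one₀ hϑ.2 hs.1.le hs.2⟩
  have hF : ContinuousOn (fun ϑ => ∫ s in (0:ℝ)..1, h (ϑ * s) * (1 - s) ^ b) (Ioc 0 1) := by
    intro ϑ₀ hϑ₀
    have hnear : ∀ᶠ ϑ in 𝓝[Ioc 0 1] ϑ₀, ϑ ∈ Ioc (0:ℝ) 1 ∧ ϑ ^ a < ϑ₀ ^ a + 1 :=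
      eventually_mem_nhdsWithin.and <| nhdsWithin_le_nhds <|
        (continuousAt_id.rpow_const (Or.inl hϑ₀.1.ne')).eventually (gt_mem_nhds (lt_add_one _))
    refine intervalIntegral.continuousWithinAt_of_dominated_interval
      (bound := fun s => M * (ϑ₀ ^ a + 1) * (s ^ a * (1 - s) ^ b)) ?_ ?_
      ((intervalIntegrable_rpow_mul_sub_rpow ha hb one_pos).const_mul _) ?_
    · filter_upwards [hnear] with ϑ hϑ
      exact aestronglyMeasurable_uIoc_of_continuousOn_Ioo zero_le_one <|
        (hcont.comp (continuousOn_const.mul continuousOn_id)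
          fun s hs => hmul hϑ.1 (Ioo_subset_Ioc_self hs)).mul <|
        (continuousOn_const.sub continuousOn_id).rpow_const fun s hs => Or.inl (sub_pos.2 hs.2).ne'
    · filter_upwards [hnear] with ϑ hϑ
      refine ae_of_all _ fun s hs => ?_
      rw [uIoc_of_le zero_le_one] at hs
      have hkernel : 0 ≤ (1 - s) ^ b := rpow_nonneg (sub_nonneg.2 hs.2) _
      rw [norm_mul, norm_of_nonneg hkernel, Real.norm_eq_abs]
      calc |h (ϑ * s)| * (1 - s) ^ b ≤ M * (ϑ ^ a * s ^ a) * (1 - s) ^ b := by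
            rw [← mul_rpow hϑ.1.1.le hs.1.le]
            exact mul_le_mul_of_nonneg_right (hM _ (hmul hϑ.1 hs)) hkernel
        _ ≤ M * ((ϑ₀ ^ a + 1) * s ^ a) * (1 - s) ^ b := by
            have hsa := rpow_nonneg hs.1.le a
            gcongr
            exact hϑ.2.le
        _ = M * (ϑ₀ ^ a + 1) * (s ^ a * (1 - s) ^ b) := by ring
    · refine ae_of_all _ fun s hs => ?_
      rw [uIoc_of_le zero_le_one] at hs
      exact ((hcont _ (hmul hϑ₀ hs)).comp (f := (· * s)) (x := ϑ₀)
        (continuous_mul_const s).continuousWithinAt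
        fun ϑ hϑ => hmul hϑ hs).mul continuousWithinAt_const
  exact ((continuousOn_id.rpow_const fun ϑ hϑ => Or.inl hϑ.1.ne').mul hF).congr
    fun ϑ hϑ => intervalIntegral_mul_sub_rpow_eq h b hϑ.1

end WeightedBound

lemma tendsto_prod_range_zero {q : ℕ → ℝ} (hq0 : ∀ k, 0 ≤ q k) (hq : Tendsto q atTop (𝓝 0)) :
    Tendsto (fun n => ∏ k ∈ Finset.range n, q k) atTop (𝓝 0) := by
  refine (summable_of_ratio_norm_eventually_le (r := 1 / 2) (by norm_num) ?_).tendsto_atTop_zero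
  filter_upwards [hq.eventually_le_const (by norm_num : (0:ℝ) < 1 / 2)] with n hn
  rw [Finset.prod_range_succ, norm_mul, norm_of_nonneg (hq0 n), mul_comm]
  exact mul_le_mul_of_nonneg_right hn (norm_nonneg _)

lemma existsUnique_isFixedPt_of_dist_iterate_le {X : Type*} [MetricSpace X] [Nonempty X]
    [CompleteSpace X] {f : X → X} {C : ℕ → ℝ} (hC : Tendsto C atTop (𝓝 0))
    (hf : ∀ n x y, dist (f^[n] x) (f^[n] y) ≤ C n * dist x y) : ∃! x, Function.IsFixedPt f x := by
  obtain ⟨n, hn⟩ := (hC.eventually_lt_const one_pos).exists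
  have hcontr : ContractingWith (C n).toNNReal f^[n] :=
    ⟨Real.toNNReal_lt_one.2 hn, LipschitzWith.of_dist_le_mul fun x y =>
      (hf n x y).trans (mul_le_mul_of_nonneg_right (Real.le_coe_toNNReal _) dist_nonneg)⟩
  exact ⟨_, hcontr.isFixedPt_fixedPoint_iterate,
    fun y hy => hcontr.fixedPoint_unique (hy.iterate n)⟩

local notation "𝓑" => BoundedContinuousFunction (Ioc (0:ℝ) 1) ℝ

/-- `g : 𝓑` encodes the function `ζ ↦ ζ ^ (α - 1) * g ζ` of `C^{1-α}(0,1]`; its values outside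
`(0,1]` never matter. -/
noncomputable def unweight (α : ℝ) (g : 𝓑) (ζ : ℝ) : ℝ :=
  if hζ : ζ ∈ Ioc (0:ℝ) 1 then ζ ^ (α - 1) * g ⟨ζ, hζ⟩ else 0

section Unweight

variable {α : ℝ} {g : 𝓑} {ζ : ℝ}

lemma unweight_of_mem (hζ : ζ ∈ Ioc (0:ℝ) 1) : unweight α g ζ = ζ ^ (α - 1) * g ⟨ζ, hζ⟩ :=
  dif_pos hζ

lemma rpow_one_sub_mul_unweight (hζ : ζ ∈ Ioc (0:ℝ) 1) :
    ζ ^ (1 - α) * unweight α g ζ = g ⟨ζ, hζ⟩ := by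
  rw [unweight_of_mem hζ, ← mul_assoc, ← rpow_add hζ.1]
  simp

lemma unweight_sub (g₁ g₂ : 𝓑) : unweight α (g₁ - g₂) = unweight α g₁ - unweight α g₂ := by
  funext ζ
  by_cases hζ : ζ ∈ Ioc (0:ℝ) 1
  · simp only [Pi.sub_apply, unweight_of_mem hζ, BoundedContinuousFunction.coe_sub]
    ring
  · simp [unweight, hζ]

lemma continuousOn_unweight : ContinuousOn (unweight α g) (Ioc 0 1) := by
  rw [continuousOn_iff_continuous_domRestrict]
  have hfun : (Ioc (0:ℝ) 1).domRestrict (unweight α g) =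
      fun z : Ioc (0:ℝ) 1 => (z:ℝ) ^ (α - 1) * g z := by
    funext z
    exact unweight_of_mem z.2
  rw [hfun]
  exact ((continuous_subtype_val.rpow_const fun z => Or.inl z.2.1.ne')).mul g.continuous

lemma abs_unweight_le {γ K : ℝ} (hg : ∀ z : Ioc (0:ℝ) 1, |g z| ≤ K * (z:ℝ) ^ γ)
    (hζ : ζ ∈ Ioc (0:ℝ) 1) : |unweight α g ζ| ≤ K * ζ ^ (γ + α - 1) := by
  rw [unweight_of_mem hζ, abs_mul, abs_of_nonneg (rpow_nonneg hζ.1.le _), add_sub_assoc,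
    rpow_add hζ.1]
  calc ζ ^ (α - 1) * |g ⟨ζ, hζ⟩| ≤ ζ ^ (α - 1) * (K * ζ ^ γ) :=
        mul_le_mul_of_nonneg_left (hg _) (rpow_nonneg hζ.1.le _)
    _ = K * (ζ ^ γ * ζ ^ (α - 1)) := by ring

lemma abs_unweight_le_norm (hζ : ζ ∈ Ioc (0:ℝ) 1) : |unweight α g ζ| ≤ ‖g‖ * ζ ^ (α - 1) := by
  simpa using abs_unweight_le (γ := 0) (fun z => by simpa using g.norm_coe_le_norm z) hζ

end Unweight

/-- `ȳ + I^α (c y + d)`, with `I^α` the Riemann–Liouville fractional integral. -/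
noncomputable def volterra (α : ℝ) (ybar c d y : ℝ → ℝ) (ϑ : ℝ) : ℝ :=
  ybar ϑ + 1 / Gamma α * ∫ ζ in (0:ℝ)..ϑ, (c ζ * y ζ + d ζ) * (ϑ - ζ) ^ (α - 1)

def IsSolution (α : ℝ) (ybar c d y : ℝ → ℝ) : Prop :=
  ContinuousOn y (Ioc 0 1) ∧ (∃ K, ∀ ζ ∈ Ioc (0:ℝ) 1, |ζ ^ (1 - α) * y ζ| ≤ K) ∧
    ∀ ϑ ∈ Ioc (0:ℝ) 1, y ϑ = volterra α ybar c d y ϑ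

section Volterra

variable {α : ℝ} {ybar c d y y₁ y₂ : ℝ → ℝ}

lemma volterra_congr (hy : EqOn y₁ y₂ (Ioc 0 1)) {ϑ : ℝ} (hϑ : ϑ ∈ Ioc (0:ℝ) 1) :
    volterra α ybar c d y₁ ϑ = volterra α ybar c d y₂ ϑ := by
  unfold volterra
  congr 2
  refine intervalIntegral.integral_congr_ae (ae_of_all _ fun ζ hζ => ?_)
  rw [uIoc_of_le hϑ.1.le] at hζ
  rw [hy ⟨hζ.1, hζ.2.trans hϑ.2⟩]

lemma exists_abs_forcing_le (hα : α ≤ 1) (hc : ContinuousOn c (Icc 0 1))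
    (hd : ContinuousOn d (Icc 0 1)) {K : ℝ} (hy : ∀ ζ ∈ Ioc (0:ℝ) 1, |y ζ| ≤ K * ζ ^ (α - 1)) :
    ∃ M, ∀ ζ ∈ Ioc (0:ℝ) 1, |c ζ * y ζ + d ζ| ≤ M * ζ ^ (α - 1) := by
  obtain ⟨Mc, hMc⟩ := isCompact_Icc.exists_bound_of_continuousOn hc
  obtain ⟨Md, hMd⟩ := isCompact_Icc.exists_bound_of_continuousOn hd
  refine ⟨Mc * K + Md, fun ζ hζ => ?_⟩
  have hcζ : |c ζ| ≤ Mc := hMc ζ (Ioc_subset_Icc_self hζ)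
  have hdζ : |d ζ| ≤ Md := hMd ζ (Ioc_subset_Icc_self hζ)
  have hone : 1 ≤ ζ ^ (α - 1) := one_le_rpow_of_pos_of_le_one_of_nonpos hζ.1 hζ.2 (by linarith)
  calc |c ζ * y ζ + d ζ| ≤ |c ζ| * |y ζ| + |d ζ| := (abs_add_le _ _).trans_eq (by rw [abs_mul])
    _ ≤ Mc * (K * ζ ^ (α - 1)) + Md * ζ ^ (α - 1) :=
        add_le_add (mul_le_mul hcζ (hy ζ hζ) (abs_nonneg _) ((abs_nonneg _).trans hcζ))
          (hdζ.trans (le_mul_of_one_le_right ((abs_nonneg _).trans hdζ) hone))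
    _ = (Mc * K + Md) * ζ ^ (α - 1) := by ring

lemma intervalIntegrable_volterra_integrand (hα : α ∈ Ioo 0 1) (hc : ContinuousOn c (Icc 0 1))
    (hd : ContinuousOn d (Icc 0 1)) (hyc : ContinuousOn y (Ioc 0 1)) {K : ℝ}
    (hy : ∀ ζ ∈ Ioc (0:ℝ) 1, |y ζ| ≤ K * ζ ^ (α - 1)) {ϑ : ℝ} (hϑ : ϑ ∈ Ioc (0:ℝ) 1) :
    IntervalIntegrable (fun ζ => (c ζ * y ζ + d ζ) * (ϑ - ζ) ^ (α - 1)) volume 0 ϑ := by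
  obtain ⟨M, hM⟩ := exists_abs_forcing_le hα.2.le hc hd hy
  exact intervalIntegrable_mul_sub_rpow (by linarith [hα.1]) (by linarith [hα.1])
    (((hc.mono Ioc_subset_Icc_self).mul hyc).add (hd.mono Ioc_subset_Icc_self)) hM hϑ

lemma volterra_sub (hα : α ∈ Ioo 0 1) (hc : ContinuousOn c (Icc 0 1))
    (hd : ContinuousOn d (Icc 0 1)) (hy₁c : ContinuousOn y₁ (Ioc 0 1)) {K₁ : ℝ}
    (hy₁ : ∀ ζ ∈ Ioc (0:ℝ) 1, |y₁ ζ| ≤ K₁ * ζ ^ (α - 1)) (hy₂c : ContinuousOn y₂ (Ioc 0 1))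
    {K₂ : ℝ} (hy₂ : ∀ ζ ∈ Ioc (0:ℝ) 1, |y₂ ζ| ≤ K₂ * ζ ^ (α - 1)) {ϑ : ℝ}
    (hϑ : ϑ ∈ Ioc (0:ℝ) 1) :
    volterra α ybar c d y₁ ϑ - volterra α ybar c d y₂ ϑ =
      1 / Gamma α * ∫ ζ in (0:ℝ)..ϑ, c ζ * (y₁ ζ - y₂ ζ) * (ϑ - ζ) ^ (α - 1) := by
  unfold volterra
  rw [add_sub_add_left_eq_sub, ← mul_sub, ← intervalIntegral.integral_sub
    (intervalIntegrable_volterra_integrand hα hc hd hy₁c hy₁ hϑ)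
    (intervalIntegrable_volterra_integrand hα hc hd hy₂c hy₂ hϑ)]
  congr 1
  exact intervalIntegral.integral_congr fun ζ _ => by ring

lemma continuousOn_rpow_mul_volterra (hα : α ∈ Ioo 0 1) (hybar : ContinuousOn ybar (Ioc 0 1))
    (hc : ContinuousOn c (Icc 0 1)) (hd : ContinuousOn d (Icc 0 1))
    (hyc : ContinuousOn y (Ioc 0 1)) {K : ℝ} (hy : ∀ ζ ∈ Ioc (0:ℝ) 1, |y ζ| ≤ K * ζ ^ (α - 1)) :
    ContinuousOn (fun ϑ => ϑ ^ (1 - α) * volterra α ybar c d y ϑ) (Ioc 0 1) := by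
  obtain ⟨M, hM⟩ := exists_abs_forcing_le hα.2.le hc hd hy
  have hint := continuousOn_intervalIntegral_mul_sub_rpow (b := α - 1) (by linarith [hα.1])
    (by linarith [hα.1])
    (((hc.mono Ioc_subset_Icc_self).mul hyc).add (hd.mono Ioc_subset_Icc_self)) hM
  exact (continuousOn_id.rpow_const fun ϑ hϑ => Or.inl hϑ.1.ne').mul
    (hybar.add (continuousOn_const.mul hint))

lemma exists_abs_rpow_mul_volterra_le (hα : α ∈ Ioo 0 1)
    (hybar : ∃ K, ∀ ζ ∈ Ioc (0:ℝ) 1, |ζ ^ (1 - α) * ybar ζ| ≤ K)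
    (hc : ContinuousOn c (Icc 0 1)) (hd : ContinuousOn d (Icc 0 1)) {K : ℝ}
    (hy : ∀ ζ ∈ Ioc (0:ℝ) 1, |y ζ| ≤ K * ζ ^ (α - 1)) :
    ∃ C, ∀ ϑ ∈ Ioc (0:ℝ) 1, |ϑ ^ (1 - α) * volterra α ybar c d y ϑ| ≤ C := by
  obtain ⟨Kb, hKb⟩ := hybar
  obtain ⟨M, hM⟩ := exists_abs_forcing_le hα.2.le hc hd hy
  have hMB : 0 ≤ M * betaIntegral (α - 1) (α - 1) :=
    mul_nonneg (nonneg_of_forall_abs_le_mul_rpow hM) (betaIntegral_nonneg _ _)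
  have hΓ : 0 < 1 / Gamma α := one_div_pos.2 (Gamma_pos_of_pos hα.1)
  refine ⟨Kb + 1 / Gamma α * (M * betaIntegral (α - 1) (α - 1)), fun ϑ hϑ => ?_⟩
  have hpow : 0 < ϑ ^ (1 - α) := rpow_pos_of_pos hϑ.1 _
  have hI := abs_intervalIntegral_mul_sub_rpow_le (b := α - 1) (by linarith [hα.1])
    (by linarith [hα.1]) hM hϑ
  calc |ϑ ^ (1 - α) * volterra α ybar c d y ϑ|
      = |ϑ ^ (1 - α) * ybar ϑ + 1 / Gamma α * (ϑ ^ (1 - α) *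
          ∫ ζ in (0:ℝ)..ϑ, (c ζ * y ζ + d ζ) * (ϑ - ζ) ^ (α - 1))| := by
        rw [volterra, mul_add, mul_left_comm (ϑ ^ (1 - α))]
    _ ≤ |ϑ ^ (1 - α) * ybar ϑ| + 1 / Gamma α * (ϑ ^ (1 - α) *
          |∫ ζ in (0:ℝ)..ϑ, (c ζ * y ζ + d ζ) * (ϑ - ζ) ^ (α - 1)|) :=
        (abs_add_le _ _).trans_eq (by simp only [abs_mul, abs_of_pos hΓ, abs_of_pos hpow])
    _ ≤ Kb + 1 / Gamma α * (ϑ ^ (1 - α) *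
          (M * betaIntegral (α - 1) (α - 1) * ϑ ^ (α - 1 + (α - 1) + 1))) := by
        gcongr
        exact hKb ϑ hϑ
    _ = Kb + 1 / Gamma α * (M * betaIntegral (α - 1) (α - 1) * ϑ ^ α) := by
        rw [mul_left_comm (ϑ ^ (1 - α)), ← rpow_add hϑ.1]
        ring_nf
    _ ≤ Kb + 1 / Gamma α * (M * betaIntegral (α - 1) (α - 1)) :=
        add_le_add le_rfl (mul_le_mul_of_nonneg_left
          (mul_le_of_le_one_right hMB (rpow_le_one hϑ.1.le hϑ.2 hα.1.le)) hΓ.le)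

end Volterra

def IsPicardMap (α : ℝ) (ybar c d : ℝ → ℝ) (Φ : 𝓑 → 𝓑) : Prop :=
  ∀ g (z : Ioc (0:ℝ) 1), Φ g z = (z:ℝ) ^ (1 - α) * volterra α ybar c d (unweight α g) z

section Picard

variable {α : ℝ} {ybar c d : ℝ → ℝ} {Φ : 𝓑 → 𝓑}

lemma exists_isPicardMap (hα : α ∈ Ioo 0 1) (hybar_cont : ContinuousOn ybar (Ioc 0 1))
    (hybar_bdd : ∃ K, ∀ ζ ∈ Ioc (0:ℝ) 1, |ζ ^ (1 - α) * ybar ζ| ≤ K)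
    (hc : ContinuousOn c (Icc 0 1)) (hd : ContinuousOn d (Icc 0 1)) :
    ∃ Φ, IsPicardMap α ybar c d Φ := by
  have hG (g : 𝓑) : ∃ G : 𝓑, ∀ z : Ioc (0:ℝ) 1,
      G z = (z:ℝ) ^ (1 - α) * volterra α ybar c d (unweight α g) z := by
    have hg := fun ζ (hζ : ζ ∈ Ioc (0:ℝ) 1) => abs_unweight_le_norm (α := α) (g := g) hζ
    obtain ⟨C, hC⟩ := exists_abs_rpow_mul_volterra_le hα hybar_bdd hc hd hg
    exact ⟨.ofNormedAddCommGroup _ (continuousOn_iff_continuous_domRestrict.1 <|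
      continuousOn_rpow_mul_volterra hα hybar_cont hc hd continuousOn_unweight hg) C
        fun z => hC z z.2, fun _ => rfl⟩
  choose Φ hΦ using hG
  exact ⟨Φ, hΦ⟩

lemma abs_picard_sub_le (hα : α ∈ Ioo 0 1) (hc : ContinuousOn c (Icc 0 1))
    (hd : ContinuousOn d (Icc 0 1)) {Mc : ℝ} (hMc : ∀ ζ ∈ Ioc (0:ℝ) 1, |c ζ| ≤ Mc)
    (hΦ : IsPicardMap α ybar c d Φ) {g₁ g₂ : 𝓑} {γ K : ℝ} (hγ : 0 < γ + α)
    (hg : ∀ z : Ioc (0:ℝ) 1, |g₁ z - g₂ z| ≤ K * (z:ℝ) ^ γ) (z : Ioc (0:ℝ) 1) :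
    |Φ g₁ z - Φ g₂ z| ≤
      Mc / Gamma α * betaIntegral (γ + α - 1) (α - 1) * K * (z:ℝ) ^ (γ + α) := by
  obtain ⟨ϑ, hϑ⟩ := z
  have hMc0 : 0 ≤ Mc := (abs_nonneg _).trans (hMc 1 (right_mem_Ioc.2 one_pos))
  have hdiff : ∀ ζ ∈ Ioc (0:ℝ) 1,
      |c ζ * (unweight α g₁ ζ - unweight α g₂ ζ)| ≤ Mc * K * ζ ^ (γ + α - 1) := by
    intro ζ hζ
    rw [← Pi.sub_apply (unweight α g₁), ← unweight_sub, abs_mul, mul_assoc]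
    exact mul_le_mul (hMc ζ hζ) (abs_unweight_le (fun z => by simpa using hg z) hζ)
      (abs_nonneg _) hMc0
  have hI := abs_intervalIntegral_mul_sub_rpow_le (b := α - 1) (by linarith)
    (by linarith [hα.1]) hdiff hϑ
  have hpow : 0 < ϑ ^ (1 - α) := rpow_pos_of_pos hϑ.1 _
  have hΓ : 0 < 1 / Gamma α := one_div_pos.2 (Gamma_pos_of_pos hα.1)
  rw [hΦ, hΦ, ← mul_sub, volterra_sub hα hc hd continuousOn_unweight
    (fun _ hζ => abs_unweight_le_norm hζ) continuousOn_unweight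
    (fun _ hζ => abs_unweight_le_norm hζ) hϑ, abs_mul, abs_mul,
    abs_of_pos hpow, abs_of_pos hΓ]
  calc ϑ ^ (1 - α) * (1 / Gamma α *
        |∫ ζ in (0:ℝ)..ϑ, c ζ * (unweight α g₁ ζ - unweight α g₂ ζ) * (ϑ - ζ) ^ (α - 1)|)
      ≤ ϑ ^ (1 - α) * (1 / Gamma α * (Mc * K * betaIntegral (γ + α - 1) (α - 1) *
          ϑ ^ (γ + α - 1 + (α - 1) + 1))) := by gcongr
    _ = Mc / Gamma α * betaIntegral (γ + α - 1) (α - 1) * K * ϑ ^ (γ + α) := by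
        rw [mul_left_comm, mul_left_comm (ϑ ^ (1 - α)), ← rpow_add hϑ.1]
        ring_nf

lemma abs_iterate_picard_sub_le (hα : α ∈ Ioo 0 1) (hc : ContinuousOn c (Icc 0 1))
    (hd : ContinuousOn d (Icc 0 1)) {Mc : ℝ} (hMc : ∀ ζ ∈ Ioc (0:ℝ) 1, |c ζ| ≤ Mc)
    (hΦ : IsPicardMap α ybar c d Φ) (n : ℕ) (g₁ g₂ : 𝓑) (z : Ioc (0:ℝ) 1) :
    |Φ^[n] g₁ z - Φ^[n] g₂ z| ≤
      (∏ k ∈ Finset.range n, Mc / Gamma α * betaIntegral (k * α + α - 1) (α - 1)) *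
        dist g₁ g₂ * (z:ℝ) ^ (n * α) := by
  induction n generalizing z with
  | zero => simpa [← Real.dist_eq] using g₁.dist_coe_le_dist z
  | succ n ih =>
    rw [Function.iterate_succ_apply', Function.iterate_succ_apply', Finset.prod_range_succ]
    refine (abs_picard_sub_le hα hc hd hMc hΦ (by positivity [hα.1]) ih z).trans_eq ?_
    push_cast
    ring_nf

lemma dist_iterate_picard_le (hα : α ∈ Ioo 0 1) (hc : ContinuousOn c (Icc 0 1))
    (hd : ContinuousOn d (Icc 0 1)) {Mc : ℝ} (hMc : ∀ ζ ∈ Ioc (0:ℝ) 1, |c ζ| ≤ Mc)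
    (hΦ : IsPicardMap α ybar c d Φ) (n : ℕ) (g₁ g₂ : 𝓑) :
    dist (Φ^[n] g₁) (Φ^[n] g₂) ≤
      (∏ k ∈ Finset.range n, Mc / Gamma α * betaIntegral (k * α + α - 1) (α - 1)) *
        dist g₁ g₂ := by
  have hMc0 : 0 ≤ Mc := (abs_nonneg _).trans (hMc 1 (right_mem_Ioc.2 one_pos))
  have hC : 0 ≤ (∏ k ∈ Finset.range n, Mc / Gamma α * betaIntegral (k * α + α - 1) (α - 1)) *
      dist g₁ g₂ :=
    mul_nonneg (Finset.prod_nonneg fun _ _ => mul_nonneg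
      (div_nonneg hMc0 (Gamma_pos_of_pos hα.1).le) (betaIntegral_nonneg _ _)) dist_nonneg
  refine (BoundedContinuousFunction.dist_le hC).2 fun z => ?_
  rw [Real.dist_eq]
  exact (abs_iterate_picard_sub_le hα hc hd hMc hΦ n g₁ g₂ z).trans
    (mul_le_of_le_one_right hC (rpow_le_one z.2.1.le z.2.2 (by positivity [hα.1])))

lemma existsUnique_isFixedPt_of_isPicardMap (hα : α ∈ Ioo 0 1) (hc : ContinuousOn c (Icc 0 1))
    (hd : ContinuousOn d (Icc 0 1)) (hΦ : IsPicardMap α ybar c d Φ) :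
    ∃! g, Function.IsFixedPt Φ g := by
  obtain ⟨Mc, hMc⟩ := isCompact_Icc.exists_bound_of_continuousOn hc
  have hMc' : ∀ ζ ∈ Ioc (0:ℝ) 1, |c ζ| ≤ Mc := fun ζ hζ => hMc ζ (Ioc_subset_Icc_self hζ)
  have hMc0 : 0 ≤ Mc := (abs_nonneg _).trans (hMc' 1 (right_mem_Ioc.2 one_pos))
  have hexp : Tendsto (fun k : ℕ => k * α + α - 1) atTop atTop := by
    simpa only [add_sub_assoc] using tendsto_atTop_add_const_right _ (α - 1)
      (tendsto_natCast_atTop_atTop.atTop_mul_const hα.1)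
  have hq := ((tendsto_betaIntegral_atTop (by linarith [hα.1] : -1 < α - 1)).comp hexp).const_mul
    (Mc / Gamma α)
  rw [mul_zero] at hq
  exact existsUnique_isFixedPt_of_dist_iterate_le
    (tendsto_prod_range_zero (fun _ => mul_nonneg (div_nonneg hMc0 (Gamma_pos_of_pos hα.1).le)
      (betaIntegral_nonneg _ _)) hq) (dist_iterate_picard_le hα hc hd hMc' hΦ)

lemma isSolution_unweight (hΦ : IsPicardMap α ybar c d Φ) {g : 𝓑}
    (hg : Function.IsFixedPt Φ g) : IsSolution α ybar c d (unweight α g) := by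
  refine ⟨continuousOn_unweight, ⟨‖g‖, fun ζ hζ => ?_⟩, fun ϑ hϑ => ?_⟩
  · rw [rpow_one_sub_mul_unweight hζ]
    exact g.norm_coe_le_norm _
  · have hgϑ := hΦ g ⟨ϑ, hϑ⟩
    rw [hg.eq] at hgϑ
    rw [unweight_of_mem hϑ, hgϑ, ← mul_assoc, ← rpow_add hϑ.1]
    simp

lemma exists_isFixedPt_of_isSolution (hΦ : IsPicardMap α ybar c d Φ) {y : ℝ → ℝ}
    (hy : IsSolution α ybar c d y) :
    ∃ g, Function.IsFixedPt Φ g ∧ EqOn (unweight α g) y (Ioc 0 1) := by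
  obtain ⟨hyc, ⟨K, hK⟩, hy_eq⟩ := hy
  let g : 𝓑 := .ofNormedAddCommGroup ((Ioc (0:ℝ) 1).domRestrict fun ζ => ζ ^ (1 - α) * y ζ)
    (continuousOn_iff_continuous_domRestrict.1 <|
      (continuousOn_id.rpow_const fun ζ hζ => Or.inl hζ.1.ne').mul hyc) K fun z => hK z z.2
  have hgy : EqOn (unweight α g) y (Ioc 0 1) := fun ζ hζ => by
    rw [unweight_of_mem hζ]
    change ζ ^ (α - 1) * (ζ ^ (1 - α) * y ζ) = y ζ
    rw [← mul_assoc, ← rpow_add hζ.1]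
    simp
  refine ⟨g, BoundedContinuousFunction.ext fun z => ?_, hgy⟩
  rw [hΦ, volterra_congr hgy z.2, ← hy_eq z z.2]
  rfl

end Picard

end WeaklySingularVolterra

open WeaklySingularVolterra

theorem stmt_9 (α : ℝ) (hα : α ∈ Set.Ioo (0:ℝ) 1)
    (ybar : ℝ → ℝ) (hybar_cont : ContinuousOn ybar (Set.Ioc 0 1))
    (hybar_bdd : ∃ K, ∀ ζ ∈ Set.Ioc (0:ℝ) 1, |ζ ^ (1 - α) * ybar ζ| ≤ K)
    (c d : ℝ → ℝ) (hc : ContinuousOn c (Set.Icc 0 1)) (hd : ContinuousOn d (Set.Icc 0 1)) :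
    (∃ y : ℝ → ℝ, ContinuousOn y (Set.Ioc 0 1) ∧
        (∃ K, ∀ ζ ∈ Set.Ioc (0:ℝ) 1, |ζ ^ (1 - α) * y ζ| ≤ K) ∧
        ∀ ϑ ∈ Set.Ioc (0:ℝ) 1,
          y ϑ = ybar ϑ + (1 / Real.Gamma α) *
            ∫ ζ in (0:ℝ)..ϑ, (c ζ * y ζ + d ζ) * (ϑ - ζ) ^ (α - 1)) ∧
    (∀ y₁ y₂ : ℝ → ℝ,
      (ContinuousOn y₁ (Set.Ioc 0 1) ∧
        (∃ K, ∀ ζ ∈ Set.Ioc (0:ℝ) 1, |ζ ^ (1 - α) * y₁ ζ| ≤ K) ∧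
        ∀ ϑ ∈ Set.Ioc (0:ℝ) 1,
          y₁ ϑ = ybar ϑ + (1 / Real.Gamma α) *
            ∫ ζ in (0:ℝ)..ϑ, (c ζ * y₁ ζ + d ζ) * (ϑ - ζ) ^ (α - 1)) →
      (ContinuousOn y₂ (Set.Ioc 0 1) ∧
        (∃ K, ∀ ζ ∈ Set.Ioc (0:ℝ) 1, |ζ ^ (1 - α) * y₂ ζ| ≤ K) ∧
        ∀ ϑ ∈ Set.Ioc (0:ℝ) 1,
          y₂ ϑ = ybar ϑ + (1 / Real.Gamma α) *
            ∫ ζ in (0:ℝ)..ϑ, (c ζ * y₂ ζ + d ζ) * (ϑ - ζ) ^ (α - 1)) →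
      ∀ ϑ ∈ Set.Ioc (0:ℝ) 1, y₁ ϑ = y₂ ϑ) := by
  obtain ⟨Φ, hΦ⟩ := exists_isPicardMap hα hybar_cont hybar_bdd hc hd
  obtain ⟨g, hg, hg_unique⟩ := existsUnique_isFixedPt_of_isPicardMap hα hc hd hΦ
  refine ⟨⟨unweight α g, isSolution_unweight hΦ hg⟩, fun y₁ y₂ hy₁ hy₂ ϑ hϑ => ?_⟩
  obtain ⟨g₁, hg₁, hg₁y⟩ := exists_isFixedPt_of_isSolution hΦ hy₁
  obtain ⟨g₂, hg₂, hg₂y⟩ := exists_isFixedPt_of_isSolution hΦ hy₂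
  rw [← hg₁y hϑ, ← hg₂y hϑ, hg_unique g₁ hg₁, hg_unique g₂ hg₂]
end

section
/- Substitution reduction: If y ∈ C^{1−α}(0,1] solves y(ϑ) = ȳ(ϑ) + (1/Γ(α)) ∫₀^ϑ [c(ζ)y(ζ)+d(ζ)](ϑ−ζ)^(α−1) dζ on (0,1], then the function s defined by s(0) = 0 and s(ϑ) = ϑ^(1−α)(y(ϑ) − ȳ(ϑ)) for ϑ ∈ (0,1] extends to a continuous function on [0,1] and satisfies s(ϑ) = s̄(ϑ) + (ϑ^(1−α)/Γ(α)) ∫₀^ϑ c(ζ) s(ζ) ζ^(α−1)(ϑ−ζ)^(α−1) dζ for all ϑ ∈ [0,1], where s̄(ϑ) = (ϑ^(1−α)/Γ(α)) ∫₀^ϑ [c(ζ)ȳ(ζ)+d(ζ)](ϑ−ζ)^(α−1) dζ (with s̄(0)=0). -/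
/-!
For `ϑ > 0` the integral equation gives
`s ϑ = ϑ ^ (1 - α) / Γ(α) * ∫₀^ϑ (c y + d)(ζ) (ϑ - ζ) ^ (α - 1)`.
The weighted bound on `y` and the boundedness of `c`, `d` give `|c y + d| ≤ M ζ ^ (α - 1)`, and
`ζ ^ (α - 1) (ϑ - ζ) ^ (α - 1) ≤ (ϑ / 2) ^ (α - 1) (ζ ^ (α - 1) + (ϑ - ζ) ^ (α - 1))` because one of
`ζ`, `ϑ - ζ` is at least `ϑ / 2`. Hence the integral is `O(ϑ ^ (2α - 1))`, so `s ϑ = O(ϑ ^ α)` is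
continuous at `0`. The equation for `s` comes from splitting `c y + d = c (y - ȳ) + (c ȳ + d)`,
where `c (y - ȳ)(ζ) = c(ζ) s(ζ) ζ ^ (α - 1)` for `ζ > 0`.
-/

open MeasureTheory Real Set Filter

open scoped Topology

section RiemannLiouvilleKernel

variable {β ϑ : ℝ}

lemma rpow_mul_rpow_sub_le (hβ : β ≤ 0) {ζ : ℝ} (hζ : ζ ∈ Ioc 0 ϑ) :
    ζ ^ β * (ϑ - ζ) ^ β ≤ (ϑ / 2) ^ β * (ζ ^ β + (ϑ - ζ) ^ β) := by
  have hζβ : 0 ≤ ζ ^ β := rpow_nonneg hζ.1.le β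
  have hϑζβ : 0 ≤ (ϑ - ζ) ^ β := rpow_nonneg (sub_nonneg.2 hζ.2) β
  rcases le_or_gt ζ (ϑ / 2) with h | h
  · have : (ϑ - ζ) ^ β ≤ (ϑ / 2) ^ β :=
      rpow_le_rpow_of_nonpos (by linarith [hζ.1]) (by linarith) hβ
    nlinarith
  · have : ζ ^ β ≤ (ϑ / 2) ^ β := rpow_le_rpow_of_nonpos (by linarith [hζ.1, hζ.2]) h.le hβ
    nlinarith

lemma intervalIntegrable_rpow_sub_left (hβ : -1 < β) (ϑ a b : ℝ) :
    IntervalIntegrable (fun ζ => (ϑ - ζ) ^ β) volume a b := by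
  simpa using
    (intervalIntegral.intervalIntegrable_rpow' hβ (a := ϑ - a) (b := ϑ - b)).comp_sub_left ϑ

lemma intervalIntegrable_rpow_add_rpow_sub (hβ : -1 < β) (ϑ a b : ℝ) :
    IntervalIntegrable (fun ζ => ζ ^ β + (ϑ - ζ) ^ β) volume a b :=
  (intervalIntegral.intervalIntegrable_rpow' hβ).add (intervalIntegrable_rpow_sub_left hβ ϑ a b)

lemma integral_rpow_add_rpow_sub (hβ : -1 < β) (ϑ : ℝ) :
    ∫ ζ in (0:ℝ)..ϑ, (ζ ^ β + (ϑ - ζ) ^ β) = 2 * ϑ ^ (β + 1) / (β + 1) := by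
  rw [intervalIntegral.integral_add (intervalIntegral.intervalIntegrable_rpow' hβ)
    (intervalIntegrable_rpow_sub_left hβ ϑ 0 ϑ),
    intervalIntegral.integral_comp_sub_left (fun x => x ^ β), sub_self, sub_zero,
    integral_rpow (Or.inl hβ), zero_rpow (by linarith)]
  ring

variable {M : ℝ} {f : ℝ → ℝ}

lemma norm_mul_rpow_sub_le (hβ : β ≤ 0) (hM : ∀ ζ ∈ Ioc 0 ϑ, |f ζ| ≤ M * ζ ^ β) {ζ : ℝ}
    (hζ : ζ ∈ Ioc 0 ϑ) :
    ‖f ζ * (ϑ - ζ) ^ β‖ ≤ M * ((ϑ / 2) ^ β * (ζ ^ β + (ϑ - ζ) ^ β)) := by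
  have hϑζβ : 0 ≤ (ϑ - ζ) ^ β := rpow_nonneg (sub_nonneg.2 hζ.2) β
  have hM0 : 0 ≤ M := nonneg_of_mul_nonneg_left ((abs_nonneg _).trans (hM ζ hζ))
    (rpow_pos_of_pos hζ.1 β)
  calc ‖f ζ * (ϑ - ζ) ^ β‖ = |f ζ| * (ϑ - ζ) ^ β := by
        rw [norm_mul, norm_eq_abs, norm_eq_abs, abs_of_nonneg hϑζβ]
    _ ≤ M * (ζ ^ β * (ϑ - ζ) ^ β) := by
        rw [← mul_assoc]; exact mul_le_mul_of_nonneg_right (hM ζ hζ) hϑζβ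
    _ ≤ M * ((ϑ / 2) ^ β * (ζ ^ β + (ϑ - ζ) ^ β)) :=
        mul_le_mul_of_nonneg_left (rpow_mul_rpow_sub_le hβ hζ) hM0

lemma intervalIntegrable_mul_rpow_sub (hβ : -1 < β) (hβ0 : β ≤ 0) {b : ℝ} (hϑ : ϑ ∈ Icc 0 b)
    (hf : ContinuousOn f (Ioc 0 b)) (hM : ∀ ζ ∈ Ioc 0 b, |f ζ| ≤ M * ζ ^ β) :
    IntervalIntegrable (fun ζ => f ζ * (ϑ - ζ) ^ β) volume 0 ϑ := by
  have hsub : Ioc 0 ϑ ⊆ Ioc 0 b := Ioc_subset_Ioc_right hϑ.2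
  refine IntervalIntegrable.mono_fun'
    ((intervalIntegrable_rpow_add_rpow_sub hβ ϑ 0 ϑ).const_mul ((ϑ / 2) ^ β) |>.const_mul M) ?_ ?_
  · rw [uIoc_of_le hϑ.1]
    exact ((hf.mono hsub).aestronglyMeasurable measurableSet_Ioc).mul
      (by fun_prop : Measurable fun ζ : ℝ => (ϑ - ζ) ^ β).aestronglyMeasurable
  · rw [uIoc_of_le hϑ.1]
    exact (ae_restrict_mem measurableSet_Ioc).mono fun ζ hζ =>
      norm_mul_rpow_sub_le hβ0 (fun ζ hζ => hM ζ (hsub hζ)) hζ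

lemma abs_integral_mul_rpow_sub_le (hβ : -1 < β) (hβ0 : β ≤ 0) (hϑ : 0 ≤ ϑ)
    (hM : ∀ ζ ∈ Ioc 0 ϑ, |f ζ| ≤ M * ζ ^ β) :
    |∫ ζ in (0:ℝ)..ϑ, f ζ * (ϑ - ζ) ^ β| ≤ M * ((ϑ / 2) ^ β * (2 * ϑ ^ (β + 1) / (β + 1))) := by
  calc |∫ ζ in (0:ℝ)..ϑ, f ζ * (ϑ - ζ) ^ β|
      ≤ ∫ ζ in (0:ℝ)..ϑ, M * ((ϑ / 2) ^ β * (ζ ^ β + (ϑ - ζ) ^ β)) :=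
        intervalIntegral.norm_integral_le_of_norm_le hϑ
          (ae_of_all _ fun ζ hζ => norm_mul_rpow_sub_le hβ0 hM hζ)
          ((intervalIntegrable_rpow_add_rpow_sub hβ ϑ 0 ϑ).const_mul ((ϑ / 2) ^ β) |>.const_mul M)
    _ = M * ((ϑ / 2) ^ β * (2 * ϑ ^ (β + 1) / (β + 1))) := by
        rw [intervalIntegral.integral_const_mul, intervalIntegral.integral_const_mul,
          integral_rpow_add_rpow_sub hβ]

end RiemannLiouvilleKernel

lemma rpow_sub_one_mul_rpow_one_sub {ζ : ℝ} (hζ : 0 < ζ) (α : ℝ) :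
    ζ ^ (α - 1) * ζ ^ (1 - α) = 1 := by
  rw [← rpow_add hζ]; simp

lemma abs_rpow_one_sub_mul_integral_le {α ϑ M : ℝ} {f : ℝ → ℝ} (hα : α ∈ Ioo 0 1) (hϑ : 0 < ϑ)
    (hM : ∀ ζ ∈ Ioc 0 ϑ, |f ζ| ≤ M * ζ ^ (α - 1)) :
    |ϑ ^ (1 - α) * ∫ ζ in (0:ℝ)..ϑ, f ζ * (ϑ - ζ) ^ (α - 1)| ≤
      2 * M / (α * 2 ^ (α - 1)) * ϑ ^ α := by
  have h := abs_integral_mul_rpow_sub_le (by linarith [hα.1]) (by linarith [hα.2]) hϑ.le hM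
  rw [abs_mul, abs_of_pos (rpow_pos_of_pos hϑ _)]
  refine (mul_le_mul_of_nonneg_left h (rpow_nonneg hϑ.le _)).trans_eq ?_
  rw [div_rpow hϑ.le zero_le_two, sub_add_cancel]
  calc ϑ ^ (1 - α) * (M * (ϑ ^ (α - 1) / 2 ^ (α - 1) * (2 * ϑ ^ α / α)))
      = ϑ ^ (α - 1) * ϑ ^ (1 - α) * (2 * M / (α * 2 ^ (α - 1)) * ϑ ^ α) := by ring
    _ = 2 * M / (α * 2 ^ (α - 1)) * ϑ ^ α := by rw [rpow_sub_one_mul_rpow_one_sub hϑ, one_mul]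

lemma abs_le_mul_rpow_of_abs_rpow_mul_le {α ζ a K : ℝ} (hζ : 0 < ζ)
    (h : |ζ ^ (1 - α) * a| ≤ K) : |a| ≤ K * ζ ^ (α - 1) := by
  calc |a| = ζ ^ (α - 1) * |ζ ^ (1 - α) * a| := by
        rw [abs_mul, abs_of_pos (rpow_pos_of_pos hζ _), ← mul_assoc,
          rpow_sub_one_mul_rpow_one_sub hζ, one_mul]
    _ ≤ K * ζ ^ (α - 1) := by
        rw [mul_comm K]; exact mul_le_mul_of_nonneg_left h (rpow_nonneg hζ.le _)

lemma exists_abs_mul_add_le_rpow {α : ℝ} (hα : α ≤ 1) {c d g : ℝ → ℝ}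
    (hc : ContinuousOn c (Icc 0 1)) (hd : ContinuousOn d (Icc 0 1))
    (hg : ∃ K, ∀ ζ ∈ Ioc (0:ℝ) 1, |ζ ^ (1 - α) * g ζ| ≤ K) :
    ∃ M, ∀ ζ ∈ Ioc (0:ℝ) 1, |c ζ * g ζ + d ζ| ≤ M * ζ ^ (α - 1) := by
  obtain ⟨K, hK⟩ := hg
  obtain ⟨Kc, hKc⟩ := isCompact_Icc.exists_bound_of_continuousOn hc
  obtain ⟨Kd, hKd⟩ := isCompact_Icc.exists_bound_of_continuousOn hd
  refine ⟨Kc * K + Kd, fun ζ hζ => ?_⟩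
  have hcζ : |c ζ| ≤ Kc := hKc ζ (Ioc_subset_Icc_self hζ)
  have hdζ : |d ζ| ≤ Kd := hKd ζ (Ioc_subset_Icc_self hζ)
  have hgζ : |g ζ| ≤ K * ζ ^ (α - 1) := abs_le_mul_rpow_of_abs_rpow_mul_le hζ.1 (hK ζ hζ)
  have hone : 1 ≤ ζ ^ (α - 1) :=
    one_le_rpow_of_pos_of_le_one_of_nonpos hζ.1 hζ.2 (by linarith)
  calc |c ζ * g ζ + d ζ| ≤ |c ζ| * |g ζ| + |d ζ| := by rw [← abs_mul]; exact abs_add_le _ _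
    _ ≤ Kc * (K * ζ ^ (α - 1)) + Kd * ζ ^ (α - 1) :=
        add_le_add (mul_le_mul hcζ hgζ (abs_nonneg _) ((abs_nonneg _).trans hcζ))
          (hdζ.trans (le_mul_of_one_le_right ((abs_nonneg _).trans hdζ) hone))
    _ = (Kc * K + Kd) * ζ ^ (α - 1) := by ring

lemma intervalIntegrable_mul_add_mul_rpow_sub {α ϑ : ℝ} (hα : α ∈ Ioo 0 1) (hϑ : ϑ ∈ Icc 0 1)
    {c d g : ℝ → ℝ} (hc : ContinuousOn c (Icc 0 1)) (hd : ContinuousOn d (Icc 0 1))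
    (hg_cont : ContinuousOn g (Ioc 0 1))
    (hg : ∃ K, ∀ ζ ∈ Ioc (0:ℝ) 1, |ζ ^ (1 - α) * g ζ| ≤ K) :
    IntervalIntegrable (fun ζ => (c ζ * g ζ + d ζ) * (ϑ - ζ) ^ (α - 1)) volume 0 ϑ := by
  obtain ⟨M, hM⟩ := exists_abs_mul_add_le_rpow hα.2.le hc hd hg
  exact intervalIntegrable_mul_rpow_sub (by linarith [hα.1]) (by linarith [hα.2]) hϑ
    (((hc.mono Ioc_subset_Icc_self).mul hg_cont).add (hd.mono Ioc_subset_Icc_self)) hM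

lemma continuousWithinAt_Icc_zero_of_abs_le_rpow {f : ℝ → ℝ} {b C α : ℝ} (hα : 0 < α)
    (hf0 : f 0 = 0) (hf : ∀ x ∈ Ioc 0 b, |f x| ≤ C * x ^ α) :
    ContinuousWithinAt f (Icc 0 b) 0 := by
  have hC : Tendsto (fun x : ℝ => C * x ^ α) (𝓝[Icc 0 b] 0) (𝓝 0) := by
    simpa [zero_rpow hα.ne'] using
      (((continuousAt_rpow_const 0 α (Or.inr hα.le)).const_mul C).continuousWithinAt
        (s := Icc 0 b)).tendsto
  rw [ContinuousWithinAt, hf0]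
  refine squeeze_zero_norm' (eventually_nhdsWithin_of_forall fun x hx => ?_) hC
  rcases hx.1.eq_or_lt with rfl | hx0
  · simp [hf0, zero_rpow hα.ne']
  · exact hf x ⟨hx0, hx.2⟩

lemma ContinuousOn.Icc_of_Ioc {f : ℝ → ℝ} {a b : ℝ} (hf : ContinuousOn f (Ioc a b))
    (ha : ContinuousWithinAt f (Icc a b) a) : ContinuousOn f (Icc a b) := by
  intro x hx
  rcases hx.1.eq_or_lt with rfl | hax
  · exact ha
  · exact (hf x ⟨hax, hx.2⟩).mono_of_mem_nhdsWithin
      (mem_nhdsWithin.2 ⟨Ioi a, isOpen_Ioi, hax, fun _ hz => ⟨hz.1, hz.2.2⟩⟩)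

theorem stmt_10 (α : ℝ) (hα : α ∈ Set.Ioo (0:ℝ) 1)
    (ybar : ℝ → ℝ) (hybar_cont : ContinuousOn ybar (Set.Ioc 0 1))
    (hybar_bdd : ∃ K, ∀ ζ ∈ Set.Ioc (0:ℝ) 1, |ζ ^ (1 - α) * ybar ζ| ≤ K)
    (c d : ℝ → ℝ) (hc : ContinuousOn c (Set.Icc 0 1)) (hd : ContinuousOn d (Set.Icc 0 1))
    (y : ℝ → ℝ) (hy_cont : ContinuousOn y (Set.Ioc 0 1))
    (hy_bdd : ∃ K, ∀ ζ ∈ Set.Ioc (0:ℝ) 1, |ζ ^ (1 - α) * y ζ| ≤ K)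
    (hy_eq : ∀ ϑ ∈ Set.Ioc (0:ℝ) 1,
      y ϑ = ybar ϑ + (1 / Real.Gamma α) *
        ∫ ζ in (0:ℝ)..ϑ, (c ζ * y ζ + d ζ) * (ϑ - ζ) ^ (α - 1))
    (s sbar : ℝ → ℝ)
    (hs : ∀ ϑ : ℝ, s ϑ = if ϑ = 0 then 0 else ϑ ^ (1 - α) * (y ϑ - ybar ϑ))
    (hsbar : ∀ ϑ : ℝ, sbar ϑ = if ϑ = 0 then 0 else
      (ϑ ^ (1 - α) / Real.Gamma α) * ∫ ζ in (0:ℝ)..ϑ, (c ζ * ybar ζ + d ζ) * (ϑ - ζ) ^ (α - 1)) :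
    ContinuousOn s (Set.Icc 0 1) ∧
      ∀ ϑ ∈ Set.Icc (0:ℝ) 1,
        s ϑ = sbar ϑ + (ϑ ^ (1 - α) / Real.Gamma α) *
          ∫ ζ in (0:ℝ)..ϑ, c ζ * s ζ * ζ ^ (α - 1) * (ϑ - ζ) ^ (α - 1) := by
  have hs_pos : ∀ ϑ, 0 < ϑ → s ϑ = ϑ ^ (1 - α) * (y ϑ - ybar ϑ) := fun ϑ h => by
    rw [hs, if_neg h.ne']
  have hs_cont : ContinuousOn s (Ioc 0 1) :=
    ((continuousOn_id.rpow_const fun _ _ => Or.inr (by linarith [hα.2])).mul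
      (hy_cont.sub hybar_cont)).congr fun ϑ h => hs_pos ϑ h.1
  have hs_integral : ∀ ϑ ∈ Ioc (0:ℝ) 1,
      ∫ ζ in (0:ℝ)..ϑ, c ζ * s ζ * ζ ^ (α - 1) * (ϑ - ζ) ^ (α - 1) =
        (∫ ζ in (0:ℝ)..ϑ, (c ζ * y ζ + d ζ) * (ϑ - ζ) ^ (α - 1)) -
          ∫ ζ in (0:ℝ)..ϑ, (c ζ * ybar ζ + d ζ) * (ϑ - ζ) ^ (α - 1) := by
    intro ϑ hϑ
    rw [← intervalIntegral.integral_sub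
      (intervalIntegrable_mul_add_mul_rpow_sub hα (Ioc_subset_Icc_self hϑ) hc hd hy_cont hy_bdd)
      (intervalIntegrable_mul_add_mul_rpow_sub hα (Ioc_subset_Icc_self hϑ) hc hd hybar_cont
        hybar_bdd)]
    refine intervalIntegral.integral_congr_ae (ae_of_all _ fun ζ hζ => ?_)
    rw [uIoc_of_le hϑ.1.le] at hζ
    rw [hs_pos ζ hζ.1]
    linear_combination (c ζ * (y ζ - ybar ζ) * (ϑ - ζ) ^ (α - 1)) *
      rpow_sub_one_mul_rpow_one_sub hζ.1 α
  obtain ⟨My, hMy⟩ := exists_abs_mul_add_le_rpow hα.2.le hc hd hy_bdd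
  have hs_le : ∀ ϑ ∈ Ioc (0:ℝ) 1,
      |s ϑ| ≤ |1 / Gamma α| * (2 * My / (α * 2 ^ (α - 1))) * ϑ ^ α := by
    intro ϑ hϑ
    rw [hs_pos ϑ hϑ.1, hy_eq ϑ hϑ, add_sub_cancel_left, mul_left_comm, abs_mul, mul_assoc]
    exact mul_le_mul_of_nonneg_left (abs_rpow_one_sub_mul_integral_le hα hϑ.1
      fun ζ hζ => hMy ζ ⟨hζ.1, hζ.2.trans hϑ.2⟩) (abs_nonneg _)
  refine ⟨hs_cont.Icc_of_Ioc
    (continuousWithinAt_Icc_zero_of_abs_le_rpow hα.1 (by simp [hs]) hs_le), fun ϑ hϑ => ?_⟩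
  rcases hϑ.1.eq_or_lt with rfl | hϑ0
  · simp [hs, hsbar]
  · rw [hs_pos ϑ hϑ0, hsbar, if_neg hϑ0.ne', hy_eq ϑ ⟨hϑ0, hϑ.2⟩, hs_integral ϑ ⟨hϑ0, hϑ.2⟩]
    ring
end

section
/- Oscillation example: Let α ∈ (0,1). Define ϑ_i = 1/i! for i ∈ ℕ, fix ϑ* ∈ (0,1] with ∫₀^{1/ϑ*} (1+u)^(α−2) du > 2 ∫_{1/ϑ*}^∞ (1+u)^(α−2) du, and let ℓ : [0, 1/ϑ*] → ℝ be the indicator of ⋃_{i≥1} (ϑ_{2i+1}/ϑ*, ϑ_{2i}/ϑ*]. Define h(ϑ) = ∫₀^{1/ϑ} ℓ(ϑ u) (1+u)^(α−2) du for ϑ ∈ (0,1]. Then h has no limit as ϑ → 0⁺; in fact, there exist ε* > 0 and i* ∈ ℕ such that |h(ϑ_{2i}) − h(ϑ_{2i−1})| ≥ ε* for all i ≥ i*. -/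
/-!
Write `b = 1/ϑ*`, `f u = (1+u)^(α-2)`, `A = ∫₀^b f` and `T = ∫_b^∞ f`; note `0 ≤ f ≤ 1`.
Since `ϑ_{n+1} = ϑ_n/(n+1)`, for `ϑ = ϑ_{2i}` the indicator `ℓ(ϑu)` is `1` for `u ∈ (b/(2i+1), b]`,
so `h(ϑ_{2i}) ≥ A - b/(2i+1)`, while for `ϑ = ϑ_{2i-1}` it is `0` for `u ∈ (b/(2i), b]`,
so `h(ϑ_{2i-1}) ≤ b/(2i) + T`. The difference is therefore eventually at least `(A - T)/2`,
which is positive because `A > 2T ≥ T`.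
-/

open MeasureTheory Real Set Filter Topology
open scoped Nat

section IntegralBounds

variable {f g : ℝ → ℝ}

lemma intervalIntegrable_of_integrableOn_Ioi (hf : IntegrableOn f (Ioi 0)) {x y : ℝ}
    (hx : 0 ≤ x) (hy : 0 ≤ y) : IntervalIntegrable f volume x y := by
  rw [intervalIntegrable_iff]
  exact hf.mono_set fun _ hu => lt_of_le_of_lt (le_min hx hy) hu.1

lemma intervalIntegrable_mul_of_integrableOn_Ioi (hf : IntegrableOn f (Ioi 0))
    (hg : Measurable g) (hg01 : ∀ x, g x ∈ Icc 0 1) {x y : ℝ} (hx : 0 ≤ x) (hy : 0 ≤ y) :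
    IntervalIntegrable (fun u => g u * f u) volume x y := by
  have hfxy := intervalIntegrable_iff.1 (intervalIntegrable_of_integrableOn_Ioi hf hx hy)
  rw [intervalIntegrable_iff]
  refine hfxy.bdd_mul hg.aestronglyMeasurable (c := 1) (ae_of_all _ fun u => ?_)
  rw [norm_eq_abs, abs_of_nonneg (hg01 u).1]
  exact (hg01 u).2

lemma intervalIntegral_le_of_mem_Icc {k : ℝ → ℝ} {c : ℝ} (hc : 0 ≤ c)
    (hk : ∀ u ∈ Ioc 0 c, k u ∈ Icc 0 1) : ∫ u in 0..c, k u ≤ c := by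
  have := intervalIntegral.norm_integral_le_of_norm_le_const (C := 1) fun u hu => by
    rw [uIoc_of_le hc] at hu
    rw [norm_eq_abs, abs_of_nonneg (hk u hu).1]
    exact (hk u hu).2
  rw [sub_zero, abs_of_nonneg hc, one_mul] at this
  exact (le_abs_self _).trans this

variable (hf : IntegrableOn f (Ioi 0)) (hf01 : ∀ u, 0 ≤ u → f u ∈ Icc 0 1)
  (hg : Measurable g) (hg01 : ∀ x, g x ∈ Icc 0 1)
include hf hf01 hg hg01

lemma intervalIntegral_sub_le_intervalIntegral_mul {a b B : ℝ} (ha : 0 ≤ a) (hab : a ≤ b)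
    (hbB : b ≤ B) (hg_one : ∀ u ∈ Ioc a b, g u = 1) :
    (∫ u in 0..b, f u) - a ≤ ∫ u in 0..B, g u * f u := by
  have hb : 0 ≤ b := ha.trans hab
  have hgf {x y : ℝ} (hx : 0 ≤ x) (hy : 0 ≤ y) :=
    intervalIntegrable_mul_of_integrableOn_Ioi hf hg hg01 hx hy
  have hff {x y : ℝ} (hx : 0 ≤ x) (hy : 0 ≤ y) := intervalIntegrable_of_integrableOn_Ioi hf hx hy
  have hgf0 : ∀ u, 0 ≤ u → 0 ≤ g u * f u := fun u hu => mul_nonneg (hg01 u).1 (hf01 u hu).1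
  have hmid : ∫ u in a..b, g u * f u = ∫ u in a..b, f u :=
    intervalIntegral.integral_congr_ae (ae_of_all _ fun u hu => by
      rw [uIoc_of_le hab] at hu; rw [hg_one u hu, one_mul])
  have hhead : 0 ≤ ∫ u in 0..a, g u * f u :=
    intervalIntegral.integral_nonneg ha fun u hu => hgf0 u hu.1
  have htail : 0 ≤ ∫ u in b..B, g u * f u :=
    intervalIntegral.integral_nonneg hbB fun u hu => hgf0 u (hb.trans hu.1)
  have hsmall : ∫ u in 0..a, f u ≤ a :=
    intervalIntegral_le_of_mem_Icc ha fun u hu => hf01 u hu.1.le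
  rw [← intervalIntegral.integral_add_adjacent_intervals (hgf le_rfl hb) (hgf hb (hb.trans hbB)),
    ← intervalIntegral.integral_add_adjacent_intervals (hgf le_rfl ha) (hgf ha hb), hmid,
    ← intervalIntegral.integral_add_adjacent_intervals (hff le_rfl ha) (hff ha hb)]
  linarith

lemma intervalIntegral_mul_le_add_integral_Ioi {c b B : ℝ} (hc : 0 ≤ c) (hcb : c ≤ b)
    (hbB : b ≤ B) (hg_zero : ∀ u ∈ Ioc c b, g u = 0) :
    ∫ u in 0..B, g u * f u ≤ c + ∫ u in Ioi b, f u := by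
  have hb : 0 ≤ b := hc.trans hcb
  have hgf {x y : ℝ} (hx : 0 ≤ x) (hy : 0 ≤ y) :=
    intervalIntegrable_mul_of_integrableOn_Ioi hf hg hg01 hx hy
  have hmid : ∫ u in c..b, g u * f u = 0 := by
    rw [← intervalIntegral.integral_zero (a := c) (b := b) (μ := volume)]
    exact intervalIntegral.integral_congr_ae (ae_of_all _ fun u hu => by
      rw [uIoc_of_le hcb] at hu; rw [hg_zero u hu, zero_mul])
  have hhead : ∫ u in 0..c, g u * f u ≤ c := intervalIntegral_le_of_mem_Icc hc fun u hu =>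
    have hfu := hf01 u hu.1.le
    ⟨mul_nonneg (hg01 u).1 hfu.1, mul_le_one₀ (hg01 u).2 hfu.1 hfu.2⟩
  have htail : ∫ u in b..B, g u * f u ≤ ∫ u in Ioi b, f u := calc
    _ ≤ ∫ u in b..B, f u :=
      intervalIntegral.integral_mono_on hbB (hgf hb (hb.trans hbB))
        (intervalIntegrable_of_integrableOn_Ioi hf hb (hb.trans hbB)) fun u hu =>
          mul_le_of_le_one_left (hf01 u (hb.trans hu.1)).1 (hg01 u).2
    _ ≤ ∫ u in Ioi b, f u := by
      rw [intervalIntegral.integral_of_le hbB]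
      refine setIntegral_mono_set (hf.mono_set (Ioi_subset_Ioi hb))
        (ae_restrict_of_forall_mem measurableSet_Ioi fun u hu => (hf01 u (hb.trans hu.le)).1)
        Ioc_subset_Ioi_self.eventuallyLE
  rw [← intervalIntegral.integral_add_adjacent_intervals (hgf le_rfl hb) (hgf hb (hb.trans hbB)),
    ← intervalIntegral.integral_add_adjacent_intervals (hgf le_rfl hc) (hgf hc hb), hmid]
  linarith

end IntegralBounds

lemma not_exists_tendsto_of_oscillation {ι : Type*} {p : Filter ι} [p.NeBot] {l : Filter ℝ}
    {h : ℝ → ℝ} {x y : ι → ℝ} (hx : Tendsto x p l) (hy : Tendsto y p l) {ε : ℝ} (hε : 0 < ε)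
    (hxy : ∀ᶠ i in p, ε ≤ |h (x i) - h (y i)|) : ¬∃ L, Tendsto h l (𝓝 L) := by
  rintro ⟨L, hL⟩
  have hdiff : Tendsto (fun i => |h (x i) - h (y i)|) p (𝓝 0) := by
    simpa using ((hL.comp hx).sub (hL.comp hy)).abs
  obtain ⟨i, hsmall, hlarge⟩ := ((hdiff.eventually (gt_mem_nhds hε)).and hxy).exists
  exact hsmall.not_ge hlarge

lemma integrableOn_one_add_rpow_Ioi {p : ℝ} (hp : p < -1) :
    IntegrableOn (fun u : ℝ => (1 + u) ^ p) (Ioi 0) := by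
  simpa only [add_comm] using integrableOn_add_rpow_Ioi_of_lt hp (by norm_num : -(1:ℝ) < 0)

lemma one_add_rpow_mem_Icc {p u : ℝ} (hp : p ≤ 0) (hu : 0 ≤ u) : (1 + u) ^ p ∈ Icc 0 1 :=
  ⟨rpow_nonneg (by linarith) p, rpow_le_one_of_one_le_of_nonpos (by linarith) hp⟩

lemma antitone_inv_factorial : Antitone fun n : ℕ => ((n ! : ℝ))⁻¹ := fun _ _ hmn =>
  inv_anti₀ (by positivity) (by exact_mod_cast Nat.factorial_le hmn)

lemma inv_factorial_succ_div_inv_factorial (n : ℕ) :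
    ((n + 1)! : ℝ)⁻¹ / (n ! : ℝ)⁻¹ = 1 / ((n : ℝ) + 1) := by
  rw [Nat.factorial_succ]
  push_cast
  field_simp

lemma inv_factorial_mem_Ioc (n : ℕ) : ((n ! : ℝ))⁻¹ ∈ Ioc 0 1 :=
  ⟨by positivity, inv_le_one_of_one_le₀ (by exact_mod_cast n.factorial_pos)⟩

lemma tendsto_inv_factorial_atTop : Tendsto (fun n : ℕ => ((n ! : ℝ))⁻¹) atTop (𝓝 0) :=
  tendsto_inv_atTop_zero.comp <| tendsto_natCast_atTop_atTop.comp <|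
    tendsto_atTop_mono Nat.self_le_factorial tendsto_id

lemma mul_mem_Ioc_of_mem_Ioc_ratio {x y s u : ℝ} (hx : 0 < x) (hs : 0 < s)
    (hu : u ∈ Ioc (y / x / s) (1 / s)) : x * u ∈ Ioc (y / s) (x / s) := by
  obtain ⟨hlo, hhi⟩ := hu
  constructor
  · calc y / s = x * (y / x / s) := by field_simp
      _ < x * u := by gcongr
  · calc x * u ≤ x * (1 / s) := by gcongr
      _ = x / s := by ring

lemma tendsto_two_mul_atTop : Tendsto (fun i : ℕ => 2 * i) atTop atTop :=
  tendsto_atTop_mono (fun i => show i ≤ 2 * i by omega) tendsto_id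

lemma tendsto_two_mul_sub_one_atTop : Tendsto (fun i : ℕ => 2 * i - 1) atTop atTop :=
  tendsto_atTop_mono (fun i => show i ≤ 2 * i - 1 by omega) tendsto_id

lemma Antitone.notMem_biUnion_Ioc_even {t : ℕ → ℝ} (ht : Antitone t) (J : Set ℕ) {i : ℕ}
    (hi : 1 ≤ i) {x : ℝ} (hx : x ∈ Ioc (t (2 * i)) (t (2 * i - 1))) :
    x ∉ ⋃ j ∈ J, Ioc (t (2 * j + 1)) (t (2 * j)) := by
  have hsucc : 2 * i - 1 + 1 = 2 * i := by omega
  simp only [mem_iUnion, not_exists]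
  intro j _ hxj
  have hne : 2 * j ≠ 2 * i - 1 := by omega
  refine Set.disjoint_left.1 (ht.pairwise_disjoint_on_Ioc_succ hne)
    (show x ∈ Ioc (t (Order.succ (2 * j))) (t (2 * j)) by simpa using hxj) ?_
  simpa [hsucc] using hx

def evenBlocks (t : ℕ → ℝ) : Set ℝ := ⋃ j ∈ {j : ℕ | 1 ≤ j}, Ioc (t (2 * j + 1)) (t (2 * j))

lemma measurableSet_evenBlocks (t : ℕ → ℝ) : MeasurableSet (evenBlocks t) :=
  .biUnion (to_countable _) fun _ _ => measurableSet_Ioc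

/-- With `S = evenBlocks (fun n => ϑ_n / ϑ*)` this is `h(θ)`: `ℓ` is the indicator of `S`. -/
noncomputable def dilatedIntegral (f : ℝ → ℝ) (S : Set ℝ) (θ : ℝ) : ℝ :=
  ∫ u in 0..1 / θ, S.indicator (fun _ => (1 : ℝ)) (θ * u) * f u

lemma indicator_one_mem_Icc (S : Set ℝ) (x : ℝ) : S.indicator (fun _ => (1 : ℝ)) x ∈ Icc 0 1 := by
  by_cases hx : x ∈ S <;> simp [hx]

section Oscillation

variable {f : ℝ → ℝ} (hf : IntegrableOn f (Ioi 0)) (hf01 : ∀ u, 0 ≤ u → f u ∈ Icc 0 1)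
  {t : ℕ → ℝ} (ht : Antitone t) (ht0 : ∀ n, 0 < t n) {s : ℝ} (hs : 0 < s)
include hf hf01 ht ht0 hs

lemma sub_le_dilatedIntegral_even {i : ℕ} (hi : 1 ≤ i) (hts : t (2 * i) ≤ s) :
    (∫ u in 0..1 / s, f u) - t (2 * i + 1) / t (2 * i) / s ≤
      dilatedIntegral f (evenBlocks fun n => t n / s) (t (2 * i)) := by
  refine intervalIntegral_sub_le_intervalIntegral_mul hf hf01
    (((measurable_const.indicator (measurableSet_evenBlocks _)).comp (measurable_const_mul _)))
    (fun _ => indicator_one_mem_Icc _ _) (div_nonneg (div_nonneg (ht0 _).le (ht0 _).le) hs.le) ?_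
    (one_div_le_one_div_of_le (ht0 _) hts) fun u hu => ?_
  · gcongr
    exact div_le_one_of_le₀ (ht (by omega)) (ht0 _).le
  · exact indicator_of_mem (mem_biUnion (x := i) hi (mul_mem_Ioc_of_mem_Ioc_ratio (ht0 _) hs hu)) _

lemma dilatedIntegral_odd_le_add {i : ℕ} (hi : 1 ≤ i) (hts : t (2 * i - 1) ≤ s) :
    dilatedIntegral f (evenBlocks fun n => t n / s) (t (2 * i - 1)) ≤
      t (2 * i) / t (2 * i - 1) / s + ∫ u in Ioi (1 / s), f u := by
  refine intervalIntegral_mul_le_add_integral_Ioi hf hf01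
    (((measurable_const.indicator (measurableSet_evenBlocks _)).comp (measurable_const_mul _)))
    (fun _ => indicator_one_mem_Icc _ _) (div_nonneg (div_nonneg (ht0 _).le (ht0 _).le) hs.le) ?_
    (one_div_le_one_div_of_le (ht0 _) hts) fun u hu => ?_
  · gcongr
    exact div_le_one_of_le₀ (ht (by omega)) (ht0 _).le
  · have hts_anti : Antitone fun n => t n / s := fun _ _ hmn =>
      div_le_div_of_nonneg_right (ht hmn) hs.le
    exact indicator_of_notMem
      (hts_anti.notMem_biUnion_Ioc_even _ hi (mul_mem_Ioc_of_mem_Ioc_ratio (ht0 _) hs hu)) _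

lemma eventually_le_dilatedIntegral_sub (ht_lim : Tendsto t atTop (𝓝 0))
    (hratio : Tendsto (fun n => t (n + 1) / t n) atTop (𝓝 0)) {c : ℝ}
    (hc : c < (∫ u in 0..1 / s, f u) - ∫ u in Ioi (1 / s), f u) :
    ∀ᶠ i in atTop, c ≤ dilatedIntegral f (evenBlocks fun n => t n / s) (t (2 * i)) -
      dilatedIntegral f (evenBlocks fun n => t n / s) (t (2 * i - 1)) := by
  have hratio_odd : Tendsto (fun i => t (2 * i) / t (2 * i - 1)) atTop (𝓝 0) :=
    (hratio.comp tendsto_two_mul_sub_one_atTop).congr' <|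
      (eventually_ge_atTop 1).mono fun i hi => by simp [show 2 * i - 1 + 1 = 2 * i by omega]
  have herr := ((hratio.comp tendsto_two_mul_atTop).add hratio_odd).div_const s
  rw [add_zero, zero_div] at herr
  filter_upwards [eventually_ge_atTop 1,
    tendsto_two_mul_sub_one_atTop.eventually (ht_lim.eventually (eventually_le_nhds hs)),
    herr.eventually_lt_const (sub_pos.2 hc)] with i hi hts hsmall
  have heven := sub_le_dilatedIntegral_even hf hf01 ht ht0 hs hi ((ht (by omega)).trans hts)
  have hodd := dilatedIntegral_odd_le_add hf hf01 ht ht0 hs hi hts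
  simp only [Function.comp_apply, add_div] at hsmall
  linarith

end Oscillation

theorem stmt_15 (α : ℝ) (hα : α ∈ Set.Ioo (0:ℝ) 1)
    (th : ℕ → ℝ) (hth : ∀ i, th i = ((Nat.factorial i : ℝ))⁻¹)
    (ϑstar : ℝ) (hϑstar : ϑstar ∈ Set.Ioc (0:ℝ) 1)
    (hsep : (∫ u in (0:ℝ)..(1 / ϑstar), (1 + u) ^ (α - 2)) >
      2 * ∫ u in Set.Ioi (1 / ϑstar), (1 + u) ^ (α - 2))
    (ℓ : ℝ → ℝ)
    (hℓ : ℓ = Set.indicator (⋃ i ∈ {i : ℕ | 1 ≤ i}, Set.Ioc (th (2 * i + 1) / ϑstar) (th (2 * i) / ϑstar))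
      (fun _ => (1:ℝ)))
    (h : ℝ → ℝ)
    (hh : ∀ ϑ ∈ Set.Ioc (0:ℝ) 1, h ϑ = ∫ u in (0:ℝ)..(1 / ϑ), ℓ (ϑ * u) * (1 + u) ^ (α - 2)) :
    (¬ ∃ L : ℝ, Filter.Tendsto h (nhdsWithin 0 (Set.Ioi 0)) (nhds L)) ∧
      ∃ εstar > (0:ℝ), ∃ istar : ℕ, ∀ i ≥ istar, 1 ≤ i →
        εstar ≤ |h (th (2 * i)) - h (th (2 * i - 1))| := by
  obtain rfl : th = fun n => ((n ! : ℝ))⁻¹ := funext hth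
  subst hℓ
  set A := ∫ u in (0:ℝ)..(1 / ϑstar), (1 + u) ^ (α - 2)
  set T := ∫ u in Ioi (1 / ϑstar), (1 + u) ^ (α - 2)
  have hf01 (u : ℝ) (hu : 0 ≤ u) := one_add_rpow_mem_Icc (p := α - 2) (by linarith [hα.2]) hu
  have hT : 0 ≤ T := setIntegral_nonneg measurableSet_Ioi fun u hu =>
    (hf01 u ((one_div_pos.2 hϑstar.1).le.trans hu.le)).1
  have hratio : Tendsto (fun n : ℕ => ((n + 1)! : ℝ)⁻¹ / (n ! : ℝ)⁻¹) atTop (𝓝 0) := by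
    simpa only [inv_factorial_succ_div_inv_factorial] using tendsto_one_div_add_atTop_nhds_zero_nat
  have hgap := eventually_le_dilatedIntegral_sub
    (integrableOn_one_add_rpow_Ioi (by linarith [hα.2])) hf01 antitone_inv_factorial
    (fun n => (inv_factorial_mem_Ioc n).1) hϑstar.1 tendsto_inv_factorial_atTop hratio (c := (A - T) / 2) (by linarith)
  have hosc : ∀ᶠ i in atTop, (A - T) / 2 ≤ |h ((2 * i)! : ℝ)⁻¹ - h ((2 * i - 1)! : ℝ)⁻¹| := by
    filter_upwards [hgap] with i hi
    rw [hh _ (inv_factorial_mem_Ioc _), hh _ (inv_factorial_mem_Ioc _)]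
    exact hi.trans (le_abs_self _)
  have hlim {k : ℕ → ℕ} (hk : Tendsto k atTop atTop) :
      Tendsto (fun i => ((k i)! : ℝ)⁻¹) atTop (𝓝[>] 0) :=
    tendsto_nhdsWithin_iff.2 ⟨tendsto_inv_factorial_atTop.comp hk,
      .of_forall fun _ => (inv_factorial_mem_Ioc _).1⟩
  obtain ⟨istar, histar⟩ := eventually_atTop.1 hosc
  exact ⟨not_exists_tendsto_of_oscillation (hlim tendsto_two_mul_atTop)
    (hlim tendsto_two_mul_sub_one_atTop) (by linarith) hosc,
    _, by linarith, istar, fun i hi _ => histar i hi⟩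
end
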